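/- arXiv:2601.18020 — 6 statements merged into one kernel-verified Lean document; each statement's English description precedes it below -/
import Mathlib

section
/- A nonplanar unit-speed curve α with curvature κ > 0 and torsion τ is a normal helix with W orthogonal to the axis if and only if there is a constant θ ∈ (−π/2, π/2) such that κ/(cos²θ·κ² + τ²) · (τ/κ)' = −tan θ holds identically. -/
open Real Set
noncomputable section

/-- Euclidean dot product on `Fin 3 → ℝ`. -/
def dot3 (u v : Fin 3 → ℝ) : ℝ := ∑ i, u i * v i

lemma dot3_comm (u v : Fin 3 → ℝ) : dot3 u v = dot3 v u := by
  simp [dot3, mul_comm]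

lemma dot3_smul_left (a : ℝ) (u v : Fin 3 → ℝ) : dot3 (a • u) v = a * dot3 u v := by
  simp [dot3, Finset.mul_sum, mul_assoc]

lemma dot3_smul_right (a : ℝ) (u v : Fin 3 → ℝ) : dot3 u (a • v) = a * dot3 u v := by
  rw [dot3_comm, dot3_smul_left, dot3_comm]

lemma dot3_add_left (u w v : Fin 3 → ℝ) : dot3 (u + w) v = dot3 u v + dot3 w v := by
  simp [dot3, add_mul, Finset.sum_add_distrib]

lemma dot3_add_right (u v w : Fin 3 → ℝ) : dot3 u (v + w) = dot3 u v + dot3 u w := by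
  simp [dot3, mul_add, Finset.sum_add_distrib]

lemma dot3_zero_right (u : Fin 3 → ℝ) : dot3 u 0 = 0 := by simp [dot3]

lemma dot3_zero_left (u : Fin 3 → ℝ) : dot3 0 u = 0 := by simp [dot3]

lemma hasDerivAt_dot3 {X Y : ℝ → Fin 3 → ℝ} {X' Y' : Fin 3 → ℝ} {s : ℝ}
    (hX : HasDerivAt X X' s) (hY : HasDerivAt Y Y' s) :
    HasDerivAt (fun t => dot3 (X t) (Y t)) (dot3 X' (Y s) + dot3 (X s) Y') s := by
  have h : HasDerivAt (fun t => ∑ i : Fin 3, X t i * Y t i)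
      (∑ i : Fin 3, (X' i * Y s i + X s i * Y' i)) s :=
    HasDerivAt.fun_sum fun i _ => (hasDerivAt_pi.mp hX i).mul (hasDerivAt_pi.mp hY i)
  simpa [dot3, Finset.sum_add_distrib] using h

lemma dot3_frame {t n b : Fin 3 → ℝ} (htt : dot3 t t = 1) (hnn : dot3 n n = 1)
    (hbb : dot3 b b = 1) (htn : dot3 t n = 0) (htb : dot3 t b = 0) (hnb : dot3 n b = 0)
    (a₁ b₁ c₁ a₂ b₂ c₂ : ℝ) :
    dot3 (a₁ • t + b₁ • n + c₁ • b) (a₂ • t + b₂ • n + c₂ • b)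
      = a₁ * a₂ + b₁ * b₂ + c₁ * c₂ := by
  simp only [dot3_add_left, dot3_add_right, dot3_smul_left, dot3_smul_right,
    htt, hnn, hbb, htn, htb, hnb, dot3_comm n t, dot3_comm b t, dot3_comm b n]
  ring

lemma gram_eq_zero {t n v : Fin 3 → ℝ} (htt : dot3 t t = 1) (hnn : dot3 n n = 1)
    (htn : dot3 t n = 0) (htv : dot3 t v = 0) (hnv : dot3 n v = 0)
    (hbv : dot3 (crossProduct t n) v = 0) : v = 0 := by
  simp only [dot3, Fin.sum_univ_three, cross_apply, Matrix.cons_val_zero, Matrix.cons_val_one,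
    Matrix.head_cons, Matrix.cons_val_two, Matrix.tail_cons] at htt hnn htn htv hnv hbv
  have hvv : v 0 * v 0 + v 1 * v 1 + v 2 * v 2 = 0 := by
    linear_combination
      ((t 1 * n 2 - t 2 * n 1) * v 0 + (t 2 * n 0 - t 0 * n 2) * v 1
        + (t 0 * n 1 - t 1 * n 0) * v 2) * hbv
      + (v 0 * v 0 + v 1 * v 1 + v 2 * v 2) * (t 0 * n 0 + t 1 * n 1 + t 2 * n 2) * htn
      + (v 0 * t 0 + v 1 * t 1 + v 2 * t 2) * (n 0 * n 0 + n 1 * n 1 + n 2 * n 2) * htv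
      + ((v 0 * n 0 + v 1 * n 1 + v 2 * n 2) * (t 0 * t 0 + t 1 * t 1 + t 2 * t 2)
          - 2 * (v 0 * t 0 + v 1 * t 1 + v 2 * t 2) * (t 0 * n 0 + t 1 * n 1 + t 2 * n 2)) * hnv
      - (v 0 * v 0 + v 1 * v 1 + v 2 * v 2) * (t 0 * t 0 + t 1 * t 1 + t 2 * t 2) * hnn
      - (v 0 * v 0 + v 1 * v 1 + v 2 * v 2) * htt
  have h0 : v 0 = 0 := by nlinarith [mul_self_nonneg (v 0), mul_self_nonneg (v 1), mul_self_nonneg (v 2)]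
  have h1 : v 1 = 0 := by nlinarith [mul_self_nonneg (v 0), mul_self_nonneg (v 1), mul_self_nonneg (v 2)]
  have h2 : v 2 = 0 := by nlinarith [mul_self_nonneg (v 0), mul_self_nonneg (v 1), mul_self_nonneg (v 2)]
  funext i
  fin_cases i <;> simp [h0, h1, h2]

/-- Natural equation of normal helices: a nonplanar unit-speed curve `α` with curvature
`κ > 0` and nowhere-zero torsion `τ` is a normal helix with `W = cos θ•N + sin θ•B`
orthogonal to the axis `V` if and only if there is a constant `θ ∈ (−π/2, π/2)` with
`κ/(cos²θ·κ² + τ²) · (τ/κ)' = −tan θ` identically. -/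
theorem normal_helix_natural_equation
    (α T N B : ℝ → (Fin 3 → ℝ)) (κ τ : ℝ → ℝ)
    (hα : ∀ s, deriv α s = T s)
    (hκ : ∀ s, 0 < κ s) (hτ : ∀ s, τ s ≠ 0)
    (hκd : Differentiable ℝ κ) (hτd : Differentiable ℝ τ)
    (hT : ∀ s, deriv T s = κ s • N s)
    (hN : ∀ s, deriv N s = -κ s • T s + τ s • B s)
    (hB : ∀ s, deriv B s = -τ s • N s)
    (hTT : ∀ s, dot3 (T s) (T s) = 1) (hNN : ∀ s, dot3 (N s) (N s) = 1)
    (hBB : ∀ s, dot3 (B s) (B s) = 1)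
    (hTN : ∀ s, dot3 (T s) (N s) = 0) (hTB : ∀ s, dot3 (T s) (B s) = 0)
    (hNB : ∀ s, dot3 (N s) (B s) = 0)
    (hori : ∀ s, B s = crossProduct (T s) (N s)) :
    (∃ θ ∈ Ioo (-(π/2)) (π/2), ∃ V : Fin 3 → ℝ, V ≠ 0 ∧
        ∀ s, dot3 (Real.cos θ • N s + Real.sin θ • B s) V = 0) ↔
      (∃ θ ∈ Ioo (-(π/2)) (π/2),
        ∀ s, κ s / ((Real.cos θ)^2 * (κ s)^2 + (τ s)^2) *
          deriv (fun u => τ u / κ u) s = -Real.tan θ) := by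
  -- nonvanishing of the frame vectors
  have hTne : ∀ s, T s ≠ 0 := fun s h => by
    have := hTT s; rw [h] at this; simp [dot3] at this
  have hNne : ∀ s, N s ≠ 0 := fun s h => by
    have := hNN s; rw [h] at this; simp [dot3] at this
  -- differentiability of the frame
  have hTd : ∀ s, HasDerivAt T (κ s • N s) s := by
    intro s
    have hd : DifferentiableAt ℝ T s := by
      by_contra hc
      have h0 := deriv_zero_of_not_differentiableAt hc
      rw [hT s] at h0
      exact smul_ne_zero (hκ s).ne' (hNne s) h0
    have := hd.hasDerivAt; rwa [hT s] at this
  have hNd : ∀ s, HasDerivAt N (-κ s • T s + τ s • B s) s := by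
    intro s
    have hne : (-κ s • T s + τ s • B s) ≠ 0 := by
      intro h
      have h1 : dot3 (-κ s • T s + τ s • B s) (T s) = -κ s := by
        rw [dot3_add_left, dot3_smul_left, dot3_smul_left, hTT s, dot3_comm (B s) (T s), hTB s]
        ring
      rw [h, dot3_zero_left] at h1
      have := hκ s; linarith
    have hd : DifferentiableAt ℝ N s := by
      by_contra hc
      have h0 := deriv_zero_of_not_differentiableAt hc
      rw [hN s] at h0
      exact hne h0
    have := hd.hasDerivAt; rwa [hN s] at this
  have hBd : ∀ s, HasDerivAt B (-τ s • N s) s := by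
    intro s
    have hd : DifferentiableAt ℝ B s := by
      by_contra hc
      have h0 := deriv_zero_of_not_differentiableAt hc
      rw [hB s] at h0
      exact smul_ne_zero (neg_ne_zero.mpr (hτ s)) (hNne s) h0
    have := hd.hasDerivAt; rwa [hB s] at this
  constructor
  · -- forward direction
    rintro ⟨θ, hθ, V, hV, hVW⟩
    have hcos : 0 < Real.cos θ := Real.cos_pos_of_mem_Ioo hθ
    refine ⟨θ, hθ, ?_⟩
    set f := fun s => dot3 (T s) V with hfdef
    set g := fun s => dot3 (N s) V with hgdef
    set h := fun s => dot3 (B s) V with hhdef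
    have Hf : ∀ s, HasDerivAt f (κ s * g s) s := by
      intro s
      have := hasDerivAt_dot3 (hTd s) (hasDerivAt_const s V)
      simpa [dot3_smul_left, dot3_zero_right] using this
    have Hg : ∀ s, HasDerivAt g (-κ s * f s + τ s * h s) s := by
      intro s
      have := hasDerivAt_dot3 (hNd s) (hasDerivAt_const s V)
      rw [dot3_add_left, dot3_smul_left, dot3_smul_left, dot3_zero_right, add_zero] at this
      exact this
    have Hh : ∀ s, HasDerivAt h (-τ s * g s) s := by
      intro s
      have := hasDerivAt_dot3 (hBd s) (hasDerivAt_const s V)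
      rw [dot3_smul_left, dot3_zero_right, add_zero] at this
      exact this
    have hw : ∀ s, Real.cos θ * g s + Real.sin θ * h s = 0 := by
      intro s
      have := hVW s
      rwa [dot3_add_left, dot3_smul_left, dot3_smul_left] at this
    set u := fun s => Real.cos θ * h s - Real.sin θ * g s with hudef
    have key : ∀ s, κ s * Real.cos θ * f s = τ s * u s := by
      intro s
      have Hw : HasDerivAt (fun t => Real.cos θ * g t + Real.sin θ * h t)
          (Real.cos θ * (-κ s * f s + τ s * h s) + Real.sin θ * (-τ s * g s)) s :=
        ((Hg s).const_mul _).add ((Hh s).const_mul _)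
      have hzero : (fun t => Real.cos θ * g t + Real.sin θ * h t) = fun _ => (0:ℝ) :=
        funext hw
      rw [hzero] at Hw
      have hD := Hw.unique (hasDerivAt_const s 0)
      simp only [hudef]
      linear_combination -hD
    have hg_eq : ∀ s, g s = -Real.sin θ * u s := by
      intro s
      simp only [hudef]
      linear_combination Real.cos θ * hw s - g s * (Real.sin_sq_add_cos_sq θ)
    have hh_eq : ∀ s, h s = Real.cos θ * u s := by
      intro s
      simp only [hudef]
      linear_combination Real.sin θ * hw s - h s * (Real.sin_sq_add_cos_sq θ)
    have Hu : ∀ s, HasDerivAt u (κ s * Real.sin θ * f s) s := by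
      intro s
      have H : HasDerivAt (fun t => Real.cos θ * h t - Real.sin θ * g t)
          (Real.cos θ * (-τ s * g s) - Real.sin θ * (-κ s * f s + τ s * h s)) s :=
        ((Hh s).const_mul _).sub ((Hg s).const_mul _)
      have hval : Real.cos θ * (-τ s * g s) - Real.sin θ * (-κ s * f s + τ s * h s)
          = κ s * Real.sin θ * f s := by linear_combination (-τ s) * hw s
      rw [hval] at H
      exact H
    have Hf' : ∀ s, HasDerivAt f (-(κ s * Real.sin θ) * u s) s := by
      intro s
      have hval : κ s * g s = -(κ s * Real.sin θ) * u s := by rw [hg_eq s]; ring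
      have := Hf s; rwa [hval] at this
    have HF : ∀ s, HasDerivAt (fun t => f t ^ 2 + u t ^ 2) 0 s := by
      intro s
      have h1 : HasDerivAt (fun t => f t ^ 2)
          ((2 : ℕ) * f s ^ 1 * (-(κ s * Real.sin θ) * u s)) s := (Hf' s).pow 2
      have h2 : HasDerivAt (fun t => u t ^ 2)
          ((2 : ℕ) * u s ^ 1 * (κ s * Real.sin θ * f s)) s := (Hu s).pow 2
      have H := h1.add h2
      have hval : ((2 : ℕ) : ℝ) * f s ^ 1 * (-(κ s * Real.sin θ) * u s)
          + ((2 : ℕ) : ℝ) * u s ^ 1 * (κ s * Real.sin θ * f s) = 0 := by push_cast; ring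
      rwa [hval] at H
    have hFc : ∀ s, f s ^ 2 + u s ^ 2 = f 0 ^ 2 + u 0 ^ 2 := fun s =>
      is_const_of_deriv_eq_zero (fun x => (HF x).differentiableAt)
        (fun x => (HF x).deriv) s 0
    by_cases hc : f 0 ^ 2 + u 0 ^ 2 = 0
    · exfalso
      have hfu : ∀ s, f s = 0 ∧ u s = 0 := by
        intro s
        have hs := hFc s
        rw [hc] at hs
        constructor <;> nlinarith [sq_nonneg (f s), sq_nonneg (u s)]
      apply hV
      refine gram_eq_zero (hTT 0) (hNN 0) (hTN 0) ?_ ?_ ?_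
      · exact (hfu 0).1
      · show g 0 = 0
        rw [hg_eq 0, (hfu 0).2]; ring
      · rw [← hori 0]
        show h 0 = 0
        rw [hh_eq 0, (hfu 0).2]; ring
    · intro s
      have hune : ∀ x, u x ≠ 0 := by
        intro x hu0
        have hk := key x
        rw [hu0, mul_zero] at hk
        have hf0 : f x = 0 := by
          have hne : κ x * Real.cos θ ≠ 0 := mul_ne_zero (hκ x).ne' hcos.ne'
          rcases mul_eq_zero.mp hk with h' | h'
          · exact absurd h' hne
          · exact h'
        exact hc (by rw [← hFc x, hf0, hu0]; ring)
      have hfun : (fun v => τ v / κ v) = (fun x => Real.cos θ * f x / u x) := by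
        funext x
        rw [div_eq_div_iff (hκ x).ne' (hune x)]
        linear_combination -key x
      have Hdiv : HasDerivAt (fun x => Real.cos θ * f x / u x)
          ((Real.cos θ * (-(κ s * Real.sin θ) * u s) * u s
            - Real.cos θ * f s * (κ s * Real.sin θ * f s)) / u s ^ 2) s :=
        ((Hf' s).const_mul (Real.cos θ)).div (Hu s) (hune s)
      have hderiv : deriv (fun v => τ v / κ v) s
          = (Real.cos θ * (-(κ s * Real.sin θ) * u s) * u s
            - Real.cos θ * f s * (κ s * Real.sin θ * f s)) / u s ^ 2 := by
        rw [hfun]; exact Hdiv.deriv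
      rw [hderiv, Real.tan_eq_sin_div_cos]
      have hden2 : (Real.cos θ ^ 2 * κ s ^ 2 + τ s ^ 2) * u s ^ 2
          = κ s ^ 2 * Real.cos θ ^ 2 * (f 0 ^ 2 + u 0 ^ 2) := by
        linear_combination (-(τ s * u s + κ s * Real.cos θ * f s)) * key s
          + κ s ^ 2 * Real.cos θ ^ 2 * hFc s
      have hcpos : 0 < f 0 ^ 2 + u 0 ^ 2 :=
        lt_of_le_of_ne (by positivity) (Ne.symm hc)
      rw [div_mul_div_comm, hden2, ← neg_div,
        div_eq_div_iff (by have h1 := (hκ s).ne'; have h2 := hcos.ne'; positivity) hcos.ne']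
      linear_combination (-(κ s ^ 2 * Real.sin θ * Real.cos θ ^ 2)) * hFc s
  · -- backward direction
    rintro ⟨θ, hθ, heq⟩
    have hcos : 0 < Real.cos θ := Real.cos_pos_of_mem_Ioo hθ
    have hκne : ∀ s, κ s ≠ 0 := fun s => (hκ s).ne'
    have hρd : ∀ s, HasDerivAt (fun v => τ v / κ v) (deriv (fun v => τ v / κ v) s) s :=
      fun s => ((hτd s).div (hκd s) (hκne s)).hasDerivAt
    have hρval : ∀ s, Real.cos θ * κ s * deriv (fun v => τ v / κ v) s
        = -Real.sin θ * (Real.cos θ ^ 2 * κ s ^ 2 + τ s ^ 2) := by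
      intro s
      have hh := heq s
      rw [Real.tan_eq_sin_div_cos] at hh
      have hD : Real.cos θ ^ 2 * κ s ^ 2 + τ s ^ 2 ≠ 0 := by have := hτ s; positivity
      field_simp at hh
      rw [div_eq_iff (by have := hτ s; positivity)] at hh
      linear_combination hh
    set q := fun s => τ s / (κ s * Real.cos θ) with hqdef
    have Hq : ∀ s, HasDerivAt q (deriv (fun v => τ v / κ v) s / Real.cos θ) s := by
      intro s
      have hqe : q = fun t => (τ t / κ t) / Real.cos θ := by
        funext t; simp only [hqdef]; rw [div_div]
      rw [hqe]
      exact (hρd s).div_const _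
    set ψ := fun s => Real.arctan (q s) with hψdef
    have Hψ : ∀ s, HasDerivAt ψ (-(κ s * Real.sin θ)) s := by
      intro s
      have H := (Hq s).arctan
      have hq2 : 1 + q s ^ 2 = (Real.cos θ ^ 2 * κ s ^ 2 + τ s ^ 2) / (κ s ^ 2 * Real.cos θ ^ 2) := by
        simp only [hqdef]
        field_simp [hκne s, hcos.ne']
      have hD : Real.cos θ ^ 2 * κ s ^ 2 + τ s ^ 2 ≠ 0 := by have := hτ s; positivity
      have hval : 1 / (1 + q s ^ 2) * (deriv (fun v => τ v / κ v) s / Real.cos θ)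
          = -(κ s * Real.sin θ) := by
        rw [hq2]
        rw [one_div_div, div_mul_div_comm, div_eq_iff (mul_ne_zero hD hcos.ne')]
        linear_combination (κ s * Real.cos θ) * hρval s
      rw [hval] at H
      exact H
    have hcψ : ∀ s, 0 < Real.cos (ψ s) := by
      intro s
      simp only [hψdef]
      exact Real.cos_arctan_pos _
    have key2 : ∀ s, κ s * Real.cos θ * Real.sin (ψ s) = τ s * Real.cos (ψ s) := by
      intro s
      have ht : Real.tan (ψ s) = q s := Real.tan_arctan _
      rw [Real.tan_eq_sin_div_cos, hqdef] at ht
      rw [div_eq_div_iff (hcψ s).ne' (mul_ne_zero (hκne s) hcos.ne')] at ht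
      linear_combination ht
    set Vf := fun s => Real.sin (ψ s) • T s + (-Real.sin θ * Real.cos (ψ s)) • N s
      + (Real.cos θ * Real.cos (ψ s)) • B s with hVfdef
    have HVf : ∀ s, HasDerivAt Vf 0 s := by
      intro s
      have h1 := ((Hψ s).sin).smul (hTd s)
      have h2 := (((Hψ s).cos).const_mul (-Real.sin θ)).smul (hNd s)
      have h3 := (((Hψ s).cos).const_mul (Real.cos θ)).smul (hBd s)
      have H := (h1.add h2).add h3
      have hE : (Real.sin (ψ s) • (κ s • N s) + (Real.cos (ψ s) * -(κ s * Real.sin θ)) • T s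
            + ((-Real.sin θ * Real.cos (ψ s)) • (-κ s • T s + τ s • B s)
              + (-Real.sin θ * (-Real.sin (ψ s) * -(κ s * Real.sin θ))) • N s)
            + ((Real.cos θ * Real.cos (ψ s)) • (-τ s • N s)
              + (Real.cos θ * (-Real.sin (ψ s) * -(κ s * Real.sin θ))) • B s))
          = (0 : Fin 3 → ℝ) := by
        funext i
        simp only [Pi.add_apply, Pi.smul_apply, Pi.zero_apply, smul_eq_mul, Pi.neg_apply, neg_smul]
        linear_combination (Real.cos θ * N s i + Real.sin θ * B s i) * key2 s
          - κ s * Real.sin (ψ s) * N s i * Real.sin_sq_add_cos_sq θ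
      rw [hE] at H
      exact H
    have hVconst : ∀ s, Vf s = Vf 0 := fun s =>
      is_const_of_deriv_eq_zero (fun x => (HVf x).differentiableAt)
        (fun x => (HVf x).deriv) s 0
    refine ⟨θ, hθ, Vf 0, ?_, ?_⟩
    · intro h0
      have h1 : dot3 (Vf 0) (Vf 0) = 1 := by
        simp only [hVfdef]
        rw [dot3_frame (hTT 0) (hNN 0) (hBB 0) (hTN 0) (hTB 0) (hNB 0)]
        linear_combination Real.cos (ψ 0) ^ 2 * Real.sin_sq_add_cos_sq θ
          + Real.sin_sq_add_cos_sq (ψ 0)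
      rw [h0] at h1
      simp [dot3] at h1
    · intro s
      rw [← hVconst s]
      have hL : Real.cos θ • N s + Real.sin θ • B s
          = (0:ℝ) • T s + Real.cos θ • N s + Real.sin θ • B s := by
        rw [zero_smul, zero_add]
      rw [hL]
      simp only [hVfdef]
      rw [dot3_frame (hTT s) (hNN s) (hBB s) (hTN s) (hTB s) (hNB s)]
      ring
end
end

section
/- A nonplanar unit-speed curve α with curvature κ > 0 and torsion τ nowhere zero is an osculating helix with W orthogonal to the axis if and only if there is a nonzero constant θ such that τ/(κ² + sin²θ·τ²) · (κ/τ)' = cot θ holds identically. -/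
open Real Set
noncomputable section

lemma dot3_comb (a b : ℝ) (u v w : Fin 3 → ℝ) :
    dot3 (a • u + b • v) w = a * dot3 u w + b * dot3 v w := by
  simp [dot3, Fin.sum_univ_three]; ring

lemma hasDerivAt_dot3_s12 {u : ℝ → Fin 3 → ℝ} {u' : Fin 3 → ℝ} (v : Fin 3 → ℝ) {s : ℝ}
    (h : HasDerivAt u u' s) :
    HasDerivAt (fun x => dot3 (u x) v) (dot3 u' v) s := by
  have := HasDerivAt.fun_sum (fun i (_ : i ∈ Finset.univ) =>
    (hasDerivAt_pi.1 h i).mul_const (v i))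
  simpa [dot3] using this

lemma frame_perp_eq_zero (t n b v : Fin 3 → ℝ)
    (htt : dot3 t t = 1) (hnn : dot3 n n = 1) (hbb : dot3 b b = 1)
    (htn : dot3 t n = 0) (htb : dot3 t b = 0) (hnb : dot3 n b = 0)
    (hvt : dot3 t v = 0) (hvn : dot3 n v = 0) (hvb : dot3 b v = 0) : v = 0 := by
  classical
  simp only [dot3, Fin.sum_univ_three] at htt hnn hbb htn htb hnb hvt hvn hvb
  have h1 : (Matrix.of ![t, n, b]) * (Matrix.of ![t, n, b]).transpose = 1 := by
    ext i j
    fin_cases i <;> fin_cases j <;>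
      simp [Matrix.mul_apply, Fin.sum_univ_three, Matrix.one_apply,
        Matrix.transpose_apply, Matrix.vecHead, Matrix.vecTail, Function.comp] <;> linarith
  have h2 : (Matrix.of ![t, n, b]).transpose * (Matrix.of ![t, n, b]) = 1 :=
    mul_eq_one_comm.mp h1
  have h3 : (Matrix.of ![t, n, b]).mulVec v = 0 := by
    ext i
    fin_cases i <;>
      simp [Matrix.mulVec, dotProduct, Fin.sum_univ_three] <;> linarith
  calc v = (1 : Matrix (Fin 3) (Fin 3) ℝ).mulVec v := (Matrix.one_mulVec v).symm
    _ = ((Matrix.of ![t, n, b]).transpose * (Matrix.of ![t, n, b])).mulVec v := by rw [h2]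
    _ = (Matrix.of ![t, n, b]).transpose.mulVec ((Matrix.of ![t, n, b]).mulVec v) :=
        (Matrix.mulVec_mulVec _ _ _).symm
    _ = 0 := by rw [h3, Matrix.mulVec_zero]

lemma hasDerivAt_of_deriv_ne_zero' {f : ℝ → Fin 3 → ℝ} {s : ℝ} (h : deriv f s ≠ 0) :
    HasDerivAt f (deriv f s) s := by
  by_cases hd : DifferentiableAt ℝ f s
  · exact hd.hasDerivAt
  · exact absurd (deriv_zero_of_not_differentiableAt hd) h

/-- Natural equation of osculating helices: a nonplanar unit-speed curve `α` with curvature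
`κ > 0` and nowhere-zero torsion `τ` is an osculating helix with `W = cos θ•T + sin θ•N`
orthogonal to the axis `V` if and only if there is a nonzero constant `θ ∈ [−π/2, π/2]`
such that `τ/(κ² + sin²θ·τ²) · (κ/τ)' = cot θ` identically. -/
theorem osculating_helix_natural_equation
    (α T N B : ℝ → (Fin 3 → ℝ)) (κ τ : ℝ → ℝ)
    (hα : ∀ s, deriv α s = T s)
    (hκ : ∀ s, 0 < κ s) (hτ : ∀ s, τ s ≠ 0)
    (hκd : Differentiable ℝ κ) (hτd : Differentiable ℝ τ)
    (hT : ∀ s, deriv T s = κ s • N s)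
    (hN : ∀ s, deriv N s = -κ s • T s + τ s • B s)
    (hB : ∀ s, deriv B s = -τ s • N s)
    (hTT : ∀ s, dot3 (T s) (T s) = 1) (hNN : ∀ s, dot3 (N s) (N s) = 1)
    (hBB : ∀ s, dot3 (B s) (B s) = 1)
    (hTN : ∀ s, dot3 (T s) (N s) = 0) (hTB : ∀ s, dot3 (T s) (B s) = 0)
    (hNB : ∀ s, dot3 (N s) (B s) = 0)
    (hori : ∀ s, B s = crossProduct (T s) (N s)) :
    (∃ θ ∈ Icc (-(π/2)) (π/2), θ ≠ 0 ∧ ∃ V : Fin 3 → ℝ, V ≠ 0 ∧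
        ∀ s, dot3 (Real.cos θ • T s + Real.sin θ • N s) V = 0) ↔
      (∃ θ ∈ Icc (-(π/2)) (π/2), θ ≠ 0 ∧
        ∀ s, τ s / ((κ s)^2 + (Real.sin θ)^2 * (τ s)^2) *
          deriv (fun u => κ u / τ u) s = Real.cot θ) := by
  -- regularity of the frame
  have hTd : ∀ s, HasDerivAt T (κ s • N s) s := by
    intro s
    have hne : deriv T s ≠ 0 := by
      rw [hT s]
      intro h0
      rcases smul_eq_zero.1 h0 with h | h
      · exact (hκ s).ne' h
      · have := hNN s; rw [h] at this; simp [dot3] at this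
    have := hasDerivAt_of_deriv_ne_zero' hne
    rwa [hT s] at this
  have hBd : ∀ s, HasDerivAt B (-τ s • N s) s := by
    intro s
    have hne : deriv B s ≠ 0 := by
      rw [hB s]
      intro h0
      rcases smul_eq_zero.1 h0 with h | h
      · exact hτ s (neg_eq_zero.1 h)
      · have := hNN s; rw [h] at this; simp [dot3] at this
    have := hasDerivAt_of_deriv_ne_zero' hne
    rwa [hB s] at this
  have hNd : ∀ s, HasDerivAt N (-κ s • T s + τ s • B s) s := by
    intro s
    have hne : deriv N s ≠ 0 := by
      rw [hN s]
      intro h0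
      have h1 : dot3 (-κ s • T s + τ s • B s) (B s) = 0 := by rw [h0]; simp [dot3]
      rw [dot3_comb] at h1
      rw [hTB s, hBB s] at h1
      have : τ s = 0 := by linarith
      exact hτ s this
    have := hasDerivAt_of_deriv_ne_zero' hne
    rwa [hN s] at this
  -- derivative of κ/τ
  have hKT : ∀ s, deriv (fun u => κ u / τ u) s
      = (deriv κ s * τ s - κ s * deriv τ s) / (τ s)^2 := fun s =>
    (((hκd s).hasDerivAt).div ((hτd s).hasDerivAt) (hτ s)).deriv
  constructor
  · rintro ⟨θ, hθI, hθ0, V, hV, hperp⟩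
    refine ⟨θ, hθI, hθ0, ?_⟩
    have hs : Real.sin θ ≠ 0 := by
      intro h
      have hπ := Real.pi_pos
      exact hθ0 ((Real.sin_eq_zero_iff_of_lt_of_lt (by linarith [hθI.1])
        (by linarith [hθI.2])).mp h)
    set c := Real.cos θ with hc
    set sθ := Real.sin θ with hsθ
    set f : ℝ → ℝ := fun x => dot3 (T x) V with hfd
    set g : ℝ → ℝ := fun x => dot3 (N x) V with hgd
    set h : ℝ → ℝ := fun x => dot3 (B x) V with hhd
    have hperp' : ∀ x, c * f x + sθ * g x = 0 := by
      intro x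
      have := hperp x
      rwa [dot3_comb] at this
    have Hf : ∀ x, HasDerivAt f (κ x * g x) x := by
      intro x
      have := hasDerivAt_dot3_s12 V (hTd x)
      have e : dot3 (κ x • N x) V = κ x * g x := by
        simp [hfd, hgd, hhd, dot3, Fin.sum_univ_three]; ring
      rwa [e] at this
    have Hg : ∀ x, HasDerivAt g (-(κ x) * f x + τ x * h x) x := by
      intro x
      have := hasDerivAt_dot3_s12 V (hNd x)
      have e : dot3 (-κ x • T x + τ x • B x) V = -(κ x) * f x + τ x * h x := by
        simp [hfd, hgd, hhd, dot3, Fin.sum_univ_three]; ring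
      rwa [e] at this
    have Hh : ∀ x, HasDerivAt h (-(τ x) * g x) x := by
      intro x
      have := hasDerivAt_dot3_s12 V (hBd x)
      have e : dot3 (-τ x • N x) V = -(τ x) * g x := by
        simp [hfd, hgd, hhd, dot3, Fin.sum_univ_three]; ring
      rwa [e] at this
    -- differentiating the orthogonality relation
    have E2 : ∀ x, c * (κ x * g x) + sθ * (-(κ x) * f x + τ x * h x) = 0 := by
      intro x
      have hcomb : HasDerivAt (fun y => c * f y + sθ * g y)
          (c * (κ x * g x) + sθ * (-(κ x) * f x + τ x * h x)) x :=
        ((Hf x).const_mul c).add ((Hg x).const_mul sθ)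
      have hzero : (fun y => c * f y + sθ * g y) = fun _ => (0:ℝ) := funext hperp'
      rw [hzero] at hcomb
      exact hcomb.unique (hasDerivAt_const x 0)
    have E3 : ∀ x, κ x * g x + sθ * c * (τ x * h x) = 0 := by
      intro x
      have pyth := Real.sin_sq_add_cos_sq θ
      linear_combination c * E2 x + sθ * κ x * hperp' x - κ x * g x * pyth
    have E4 : ∀ x, deriv κ x * g x + κ x * (-(κ x) * f x + τ x * h x)
        + sθ * c * (deriv τ x * h x + τ x * (-(τ x) * g x)) = 0 := by
      intro x
      have hcomb : HasDerivAt (fun y => κ y * g y + sθ * c * (τ y * h y))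
          (deriv κ x * g x + κ x * (-(κ x) * f x + τ x * h x)
            + sθ * c * (deriv τ x * h x + τ x * (-(τ x) * g x))) x :=
        ((hκd x).hasDerivAt.mul (Hg x)).add
          (((hτd x).hasDerivAt.mul (Hh x)).const_mul (sθ * c))
      have hzero : (fun y => κ y * g y + sθ * c * (τ y * h y)) = fun _ => (0:ℝ) := funext E3
      rw [hzero] at hcomb
      exact hcomb.unique (hasDerivAt_const x 0)
    by_cases hcz : c = 0
    · -- the case θ = ±π/2
      have hg0 : ∀ x, g x = 0 := by
        intro x
        have := hperp' x
        rw [hcz] at this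
        simp at this
        rcases this with h1 | h1
        · exact absurd h1 hs
        · exact h1
      have hfh : ∀ x, -(κ x) * f x + τ x * h x = 0 := by
        intro x
        have := E2 x
        rw [hcz] at this
        simp at this
        rcases this with h1 | h1
        · exact absurd h1 hs
        · linarith
      have hf' : ∀ x, deriv f x = 0 := fun x => by rw [(Hf x).deriv, hg0 x, mul_zero]
      have hh' : ∀ x, deriv h x = 0 := fun x => by
        rw [(Hh x).deriv, hg0 x, mul_zero]
      have hfc : ∀ x, f x = f 0 := fun x =>
        is_const_of_deriv_eq_zero (fun y => (Hf y).differentiableAt) hf' x 0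
      have hhc : ∀ x, h x = h 0 := fun x =>
        is_const_of_deriv_eq_zero (fun y => (Hh y).differentiableAt) hh' x 0
      have hrel : ∀ x, κ x * f 0 = τ x * h 0 := by
        intro x
        have := hfh x
        rw [hfc x, hhc x] at this
        linarith
      have hh0 : h 0 ≠ 0 := by
        intro h0
        have hf0 : f 0 = 0 := by
          have := hrel 0
          rw [h0, mul_zero] at this
          exact (mul_eq_zero.1 this).resolve_left (hκ 0).ne'
        exact hV (frame_perp_eq_zero (T 0) (N 0) (B 0) V (hTT 0) (hNN 0) (hBB 0)
          (hTN 0) (hTB 0) (hNB 0) hf0 (hg0 0) h0)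
      have hf0 : f 0 ≠ 0 := by
        intro h0
        apply hh0
        have := hrel 0
        rw [h0, mul_zero] at this
        exact (mul_eq_zero.1 this.symm).resolve_left (hτ 0)
      have hfun : (fun u => κ u / τ u) = fun _ => h 0 / f 0 := by
        funext x
        have := hrel x
        rw [div_eq_div_iff (hτ x) hf0]
        linear_combination this
      intro x
      rw [hfun, deriv_const, Real.cot_eq_cos_div_sin, ← hc, hcz]
      simp
    · -- the generic case
      have hh : ∀ x, h x ≠ 0 := by
        intro x h0
        have hgx : g x = 0 := by
          have := E3 x
          rw [h0] at this
          simp at this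
          rcases this with h1 | h1
          · exact absurd h1 (hκ x).ne'
          · exact h1
        have hfx : f x = 0 := by
          have := hperp' x
          rw [hgx, mul_zero, add_zero] at this
          exact (mul_eq_zero.1 this).resolve_left hcz
        exact hV (frame_perp_eq_zero (T x) (N x) (B x) V (hTT x) (hNN x) (hBB x)
          (hTN x) (hTB x) (hNB x) hfx hgx h0)
      have gk : ∀ x, κ x * g x = -(sθ * c) * (τ x * h x) := fun x => by
        linear_combination E3 x
      have fk : ∀ x, κ x * f x = sθ^2 * (τ x * h x) := by
        intro x
        apply mul_left_cancel₀ hcz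
        linear_combination κ x * hperp' x - sθ * gk x
      have keyh : ∀ x, (sθ * (deriv κ x * τ x - κ x * deriv τ x)) * h x
          = (c * τ x * ((κ x)^2 + sθ^2 * (τ x)^2)) * h x := by
        intro x
        apply mul_left_cancel₀ hcz
        have pyth := Real.sin_sq_add_cos_sq θ
        linear_combination (-(κ x)) * E4 x + (deriv κ x - sθ * c * (τ x)^2) * gk x
          - (κ x)^2 * fk x + (-(κ x)^2 * τ x * h x) * pyth
      have key : ∀ x, sθ * (deriv κ x * τ x - κ x * deriv τ x)
          = c * τ x * ((κ x)^2 + sθ^2 * (τ x)^2) := fun x =>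
        mul_right_cancel₀ (hh x) (keyh x)
      intro x
      have hD : (0:ℝ) < (κ x)^2 + sθ^2 * (τ x)^2 :=
        add_pos_of_pos_of_nonneg (pow_pos (hκ x) 2) (by positivity)
      rw [hKT x, Real.cot_eq_cos_div_sin, ← hc, ← hsθ]
      rw [div_mul_div_comm, div_eq_div_iff (mul_ne_zero hD.ne' (pow_ne_zero 2 (hτ x))) hs]
      linear_combination (τ x) * key x
  · rintro ⟨θ, hθI, hθ0, hNE⟩
    refine ⟨θ, hθI, hθ0, ?_⟩
    have hs : Real.sin θ ≠ 0 := by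
      intro h
      have hπ := Real.pi_pos
      exact hθ0 ((Real.sin_eq_zero_iff_of_lt_of_lt (by linarith [hθI.1])
        (by linarith [hθI.2])).mp h)
    set c := Real.cos θ with hc
    set sθ := Real.sin θ with hsθ
    have NE' : ∀ x, sθ * (deriv κ x * τ x - κ x * deriv τ x)
        = c * τ x * ((κ x)^2 + sθ^2 * (τ x)^2) := by
      intro x
      have hD : (0:ℝ) < (κ x)^2 + sθ^2 * (τ x)^2 :=
        add_pos_of_pos_of_nonneg (pow_pos (hκ x) 2) (by positivity)
      have := hNE x
      rw [hKT x, Real.cot_eq_cos_div_sin, ← hc, ← hsθ,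
        div_mul_div_comm, div_eq_div_iff (mul_ne_zero hD.ne' (pow_ne_zero 2 (hτ x))) hs] at this
      have hτ2 : (τ x)^2 ≠ 0 := pow_ne_zero 2 (hτ x)
      apply mul_right_cancel₀ hτ2
      linear_combination τ x * this
    -- construct the axis
    have hcont : Continuous (fun x => sθ * c * (τ x)^2 / κ x) :=
      (continuous_const.mul (hτd.continuous.pow 2)).div hκd.continuous (fun x => (hκ x).ne')
    set m : ℝ → ℝ := fun x => ∫ t in (0:ℝ)..x, sθ * c * (τ t)^2 / κ t with hm
    have hmd : ∀ x, HasDerivAt m (sθ * c * (τ x)^2 / κ x) x := fun x =>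
      (hcont.integral_hasStrictDerivAt 0 x).hasDerivAt
    set C : ℝ → ℝ := fun x => Real.exp (m x) with hCdef
    have hCd : ∀ x, HasDerivAt C (sθ * c * (τ x)^2 / κ x * C x) x := fun x => by
      simpa [hCdef, mul_comm] using (hmd x).exp
    have hCpos : ∀ x, 0 < C x := fun x => Real.exp_pos _
    set q : ℝ → ℝ := fun x => τ x / κ x with hq
    have hqd : ∀ x, HasDerivAt q ((deriv τ x * κ x - τ x * deriv κ x) / (κ x)^2) x := fun x =>
      ((hτd x).hasDerivAt).div ((hκd x).hasDerivAt) (hκ x).ne'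
    set A : ℝ → ℝ := fun x => sθ^2 * (q x * C x) with hA
    set Bf : ℝ → ℝ := fun x => -(sθ * c) * (q x * C x) with hBf
    have hqC : ∀ x, HasDerivAt (fun y => q y * C y)
        ((deriv τ x * κ x - τ x * deriv κ x) / (κ x)^2 * C x
          + q x * (sθ * c * (τ x)^2 / κ x * C x)) x := fun x => (hqd x).mul (hCd x)
    have hAd : ∀ x, HasDerivAt A (sθ^2 * ((deriv τ x * κ x - τ x * deriv κ x) / (κ x)^2 * C x
          + q x * (sθ * c * (τ x)^2 / κ x * C x))) x := fun x => (hqC x).const_mul _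
    have hBfd : ∀ x, HasDerivAt Bf (-(sθ * c) * ((deriv τ x * κ x - τ x * deriv κ x) / (κ x)^2 * C x
          + q x * (sθ * c * (τ x)^2 / κ x * C x))) x := fun x => (hqC x).const_mul _
    have hVd : ∀ x i, HasDerivAt (fun y => A y * T y i + Bf y * N y i + C y * B y i) 0 x := by
      intro x i
      have hTi : HasDerivAt (fun y => T y i) (κ x * N x i) x := by
        simpa using hasDerivAt_pi.1 (hTd x) i
      have hNi : HasDerivAt (fun y => N y i) (-(κ x) * T x i + τ x * B x i) x := by
        simpa using hasDerivAt_pi.1 (hNd x) i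
      have hBi : HasDerivAt (fun y => B y i) (-(τ x) * N x i) x := by
        simpa using hasDerivAt_pi.1 (hBd x) i
      have big : HasDerivAt (fun y => A y * T y i + Bf y * N y i + C y * B y i) _ x := (((hAd x).mul hTi).add ((hBfd x).mul hNi)).add ((hCd x).mul hBi)
      convert big using 1
      have hκx : κ x ≠ 0 := (hκ x).ne'
      have hne := NE' x
      have hb : sθ * (deriv τ x * κ x - τ x * deriv κ x) + c * τ x * (κ x)^2
          + sθ^2 * c * (τ x)^3 = 0 := by linear_combination -hne
      simp only [hq, hA, hBf]
      have pyth : sθ ^ 2 + c ^ 2 = 1 := Real.sin_sq_add_cos_sq θ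
      field_simp
      linear_combination (-(sθ * C x * T x i - c * C x * N x i)) * hb
        + (-(κ x)^2 * C x * N x i * τ x) * pyth
    have hVconst : ∀ x i, A x * T x i + Bf x * N x i + C x * B x i
        = A 0 * T 0 i + Bf 0 * N 0 i + C 0 * B 0 i := fun x i =>
      is_const_of_deriv_eq_zero (fun y => (hVd y i).differentiableAt)
        (fun y => (hVd y i).deriv) x 0
    refine ⟨fun i => A 0 * T 0 i + Bf 0 * N 0 i + C 0 * B 0 i, ?_, ?_⟩
    · intro h0
      have e1 := hTB 0
      have e2 := hNB 0
      have e3 := hBB 0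
      have hdot : dot3 (B 0) (fun i => A 0 * T 0 i + Bf 0 * N 0 i + C 0 * B 0 i) = C 0 := by
        simp only [dot3, Fin.sum_univ_three] at e1 e2 e3 ⊢
        linear_combination A 0 * e1 + Bf 0 * e2 + C 0 * e3
      rw [h0] at hdot
      simp [dot3] at hdot
      exact absurd hdot.symm (hCpos 0).ne'
    · intro x
      have hVx : (fun i => A 0 * T 0 i + Bf 0 * N 0 i + C 0 * B 0 i)
          = fun i => A x * T x i + Bf x * N x i + C x * B x i :=
        funext fun i => (hVconst x i).symm
      rw [hVx, dot3_comb]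
      have e1 := hTT x
      have e2 := hTN x
      have e3 := hTB x
      have e4 := hNN x
      have e5 := hNB x
      have eT : dot3 (T x) (fun i => A x * T x i + Bf x * N x i + C x * B x i) = A x := by
        simp only [dot3, Fin.sum_univ_three] at e1 e2 e3 ⊢
        linear_combination A x * e1 + Bf x * e2 + C x * e3
      have eN : dot3 (N x) (fun i => A x * T x i + Bf x * N x i + C x * B x i) = Bf x := by
        simp only [dot3, Fin.sum_univ_three] at e2 e4 e5 ⊢
        linear_combination A x * e2 + Bf x * e4 + C x * e5
      rw [eT, eN]
      simp only [hA, hBf]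
      ring
end
end

section
/- If α is a normal helix with Frenet apparatus {κ, τ; T, N, B}, then the curve ᾱ(s) = ∫_{s₀}^s B(t) dt is a unit-speed curve with Frenet frame T_ᾱ = B, N_ᾱ = −N, B_ᾱ = T, curvature κ_ᾱ = τ and torsion τ_ᾱ = κ, and ᾱ is an osculating helix. Conversely, if ᾱ is an osculating helix then α(s) = ∫_{s₀}^s B_ᾱ(t) dt is a normal helix. -/
open Real Set
noncomputable section

/-- The natural equation of a normal helix with curvature `κ` and torsion `τ`:
`κ/(cos²θ·κ² + τ²)·(τ/κ)' = −tan θ` for some constant `θ ∈ (−π/2, π/2)`. -/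
def IsNormalHelixEq (κ τ : ℝ → ℝ) : Prop :=
  ∃ θ ∈ Ioo (-(π/2)) (π/2),
    ∀ s, κ s / ((Real.cos θ)^2 * (κ s)^2 + (τ s)^2) *
      deriv (fun u => τ u / κ u) s = -Real.tan θ

/-- The natural equation of an osculating helix with curvature `κ` and torsion `τ`:
`τ/(κ² + sin²θ·τ²)·(κ/τ)' = cot θ` for some nonzero constant `θ`. -/
def IsOsculatingHelixEq (κ τ : ℝ → ℝ) : Prop :=
  ∃ θ : ℝ, θ ≠ 0 ∧
    ∀ s, τ s / ((κ s)^2 + (Real.sin θ)^2 * (τ s)^2) *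
      deriv (fun u => κ u / τ u) s = Real.cot θ

/-- Duality between normal and osculating helices: if `α` is a curve with Frenet apparatus
`{κ, τ; T, N, B}` (`κ, τ > 0`), then `ᾱ(s) = ∫_{s₀}^s B` is a unit-speed curve whose Frenet
frame is `T_ᾱ = B`, `N_ᾱ = −N`, `B_ᾱ = T`, with curvature `κ_ᾱ = τ` and torsion `τ_ᾱ = κ`;
moreover if `α` is a normal helix then `ᾱ` is an osculating helix, and conversely if `α` is
an osculating helix then the curve `∫ B` (whose curvature is `τ` and torsion is `κ`) is a
normal helix. -/
theorem normal_osculating_duality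
    (T N B : ℝ → (Fin 3 → ℝ)) (κ τ : ℝ → ℝ) (s₀ : ℝ)
    (hκ : ∀ s, 0 < κ s) (hτ : ∀ s, 0 < τ s)
    (hκd : Differentiable ℝ κ) (hτd : Differentiable ℝ τ)
    (hT : ∀ s, deriv T s = κ s • N s)
    (hN : ∀ s, deriv N s = -κ s • T s + τ s • B s)
    (hB : ∀ s, deriv B s = -τ s • N s)
    (hBc : Continuous B)
    (hBB : ∀ s, dot3 (B s) (B s) = 1) :
    -- ᾱ = ∫ B is unit-speed with tangent T_ᾱ = B
    (∀ s, deriv (fun u => ∫ t in s₀..u, B t) s = B s) ∧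
    (∀ s, dot3 (deriv (fun u => ∫ t in s₀..u, B t) s)
      (deriv (fun u => ∫ t in s₀..u, B t) s) = 1) ∧
    -- the frame {B, −N, T} satisfies the Frenet equations with curvature τ and torsion κ
    (∀ s, deriv B s = τ s • (-(N s))) ∧
    (∀ s, deriv (fun u => -(N u)) s = -τ s • B s + κ s • T s) ∧
    (∀ s, deriv T s = -κ s • (-(N s))) ∧
    -- α normal helix → ᾱ (with curvature τ and torsion κ) is an osculating helix
    (IsNormalHelixEq κ τ → IsOsculatingHelixEq τ κ) ∧
    -- α osculating helix → the integral curve of its binormal is a normal helix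
    (IsOsculatingHelixEq κ τ → IsNormalHelixEq τ κ) := by

  have halpha : ∀ s, deriv (fun u => ∫ t in s₀..u, B t) s = B s := fun s =>
    hBc.deriv_integral B s₀ s
  refine ⟨halpha, ?_, ?_, ?_, ?_, ?_, ?_⟩
  · intro s; rw [halpha s]; exact hBB s
  · intro s; rw [hB s]; module
  · intro s
    have : deriv (fun u => -(N u)) s = -deriv N s := by
      simp [deriv.neg]
    rw [this, hN s]; module
  · intro s; rw [hT s]; module
  · rintro ⟨θ, hθmem, hθ⟩
    refine ⟨θ + π/2, by nlinarith [hθmem.1, Real.pi_pos], ?_⟩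
    intro s
    have h1 : Real.sin (θ + π/2) = Real.cos θ := by
      rw [Real.sin_add]; simp
    have h2 : Real.cot (θ + π/2) = -Real.tan θ := by
      rw [Real.cot_eq_cos_div_sin, Real.cos_add, h1, Real.tan_eq_sin_div_cos]
      simp [neg_div]
    rw [h1, h2]
    linear_combination hθ s
  · rintro ⟨θ, hθne, hθ⟩
    by_cases hs : Real.sin θ = 0
    · refine ⟨0, ⟨by linarith [Real.pi_pos], by linarith [Real.pi_pos]⟩, ?_⟩
      intro s
      have hc : Real.cot θ = 0 := by
        rw [Real.cot_eq_cos_div_sin, hs, div_zero]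
      have h := hθ s
      rw [hs, hc] at h
      have hκ0 : κ s ≠ 0 := (hκ s).ne'
      have hτ0 : τ s ≠ 0 := (hτ s).ne'
      have hd : deriv (fun u => κ u / τ u) s = 0 := by
        rcases mul_eq_zero.1 h with h' | h'
        · exact absurd h' (div_ne_zero hτ0 (by positivity))
        · exact h'
      rw [hd]
      simp
    · refine ⟨Real.arctan (-Real.cot θ),
        ⟨Real.neg_pi_div_two_lt_arctan _, Real.arctan_lt_pi_div_two _⟩, ?_⟩
      intro s
      have htan : Real.tan (Real.arctan (-Real.cot θ)) = -Real.cot θ :=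
        Real.tan_arctan _
      have hpy := Real.sin_sq_add_cos_sq θ
      have hcos2 : Real.cos (Real.arctan (-Real.cot θ))^2 = Real.sin θ ^ 2 := by
        rw [Real.cos_sq_arctan, Real.cot_eq_cos_div_sin]
        field_simp
        linarith [hpy]
      rw [hcos2, htan, neg_neg]
      linear_combination hθ s
end
end

section
/- If α is a rectifying helix, i.e., there exist a constant θ and a fixed nonzero vector V such that the F-constant vector field W = sin θ·T + cos θ·B is orthogonal to V along α, then τ/κ is constant, so α is a cylindrical helix. Conversely, every cylindrical helix is a rectifying helix. -/
open Real Set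
noncomputable section

lemma hasDerivAt_dot3_s14 {f : ℝ → Fin 3 → ℝ} {f' : Fin 3 → ℝ} {s : ℝ}
    (hf : HasDerivAt f f' s) (v : Fin 3 → ℝ) :
    HasDerivAt (fun t => dot3 (f t) v) (dot3 f' v) s := by
  have h := hasDerivAt_pi.mp hf
  exact HasDerivAt.fun_sum fun i _ => (h i).mul_const (v i)

lemma dot3_ne_zero_vec {u : Fin 3 → ℝ} (h : dot3 u u = 1) : u ≠ 0 := by
  intro h0
  rw [h0] at h
  simp [dot3] at h

/-- Key topological lemma: if the zero set of `deriv f` is open (in the sense below) and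
nonempty, it is everything. One-sided version. -/
lemma deriv_zero_right {E : Type*} [NormedAddCommGroup E] [NormedSpace ℝ E]
    (g : ℝ → E) (hg : Differentiable ℝ g)
    (hop : ∀ m, deriv g m = 0 → ∀ᶠ s in nhds m, deriv g s = 0)
    (t0 : ℝ) (h00 : deriv g t0 = 0) : ∀ t, t0 ≤ t → deriv g t = 0 := by
  intro t ht
  by_contra hbad
  have ht0t : t0 < t := ht.lt_of_ne (by rintro rfl; exact hbad h00)
  set Tset : Set ℝ := {s | s ∈ Icc t0 t ∧ deriv g s ≠ 0} with hTdef
  have hne : Tset.Nonempty := ⟨t, ⟨⟨ht, le_rfl⟩, hbad⟩⟩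
  have hbdd : BddBelow Tset := ⟨t0, fun x hx => hx.1.1⟩
  set m := sInf Tset with hmdef
  have hm_lb : ∀ x ∈ Tset, m ≤ x := fun x hx => csInf_le hbdd hx
  have ht0m : t0 ≤ m := le_csInf hne fun x hx => hx.1.1
  have hmt : m ≤ t := hm_lb t ⟨⟨ht, le_rfl⟩, hbad⟩
  have hgood : ∀ s, t0 ≤ s → s < m → deriv g s = 0 := by
    intro s hs1 hs2
    by_contra hh
    exact absurd (hm_lb s ⟨⟨hs1, hs2.le.trans hmt⟩, hh⟩) (not_le.2 hs2)
  have hderiv_m : deriv g m = 0 := by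
    rcases eq_or_lt_of_le ht0m with he | hlt
    · exact he ▸ h00
    · have hconst : ∀ x ∈ Icc t0 m, g x = g t0 := by
        apply constant_of_has_deriv_right_zero hg.continuous.continuousOn
        intro x hx
        have hx0 : deriv g x = 0 := hgood x hx.1 hx.2
        have := (hg x).hasDerivAt.hasDerivWithinAt (s := Ici x)
        rwa [hx0] at this
      have h1 : HasDerivWithinAt g (deriv g m) (Iic m) m :=
        (hg m).hasDerivAt.hasDerivWithinAt
      have h2 : HasDerivWithinAt g 0 (Iic m) m := by
        have hmem : Icc t0 m ∈ nhdsWithin m (Iic m) := Icc_mem_nhdsLE hlt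
        have heq : g =ᶠ[nhdsWithin m (Iic m)] fun _ => g t0 :=
          Filter.eventually_of_mem hmem (fun x hx => hconst x hx)
        exact (hasDerivWithinAt_const m (Iic m) (g t0)).congr_of_eventuallyEq heq
          (hconst m ⟨ht0m, le_rfl⟩)
      have hu : UniqueDiffWithinAt ℝ (Iic m) m := uniqueDiffOn_Iic m m self_mem_Iic
      have e1 : derivWithin g (Iic m) m = deriv g m := h1.derivWithin hu
      have e2 : derivWithin g (Iic m) m = 0 := h2.derivWithin hu
      rw [← e1, e2]
  obtain ⟨ε, hε, hball⟩ := Metric.eventually_nhds_iff.mp (hop m hderiv_m)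
  obtain ⟨x, hxT, hxlt⟩ := exists_lt_of_csInf_lt hne (show sInf Tset < m + ε by
    rw [← hmdef]; linarith)
  have hxm : m ≤ x := hm_lb x hxT
  have : deriv g x = 0 := by
    apply hball
    rw [Real.dist_eq, abs_sub_lt_iff]
    constructor <;> linarith
  exact hxT.2 this

lemma deriv_zero_all {E : Type*} [NormedAddCommGroup E] [NormedSpace ℝ E]
    (g : ℝ → E) (hg : Differentiable ℝ g)
    (hop : ∀ m, deriv g m = 0 → ∀ᶠ s in nhds m, deriv g s = 0)
    (t0 : ℝ) (h00 : deriv g t0 = 0) : ∀ t, deriv g t = 0 := by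
  intro t
  rcases le_total t0 t with h | h
  · exact deriv_zero_right g hg hop t0 h00 t h
  · -- reflect
    set g' : ℝ → E := fun s => g (-s) with hg'def
    have hder : ∀ s, HasDerivAt g' (-deriv g (-s)) s := by
      intro s
      have h1 : HasDerivAt g (deriv g (-s)) (-s) := (hg (-s)).hasDerivAt
      have h2 : HasDerivAt (fun x : ℝ => -x) (-1 : ℝ) s := (hasDerivAt_id s).neg
      have := h1.scomp s h2
      rw [hg'def]; simpa [Function.comp_def] using this
    have hgd' : Differentiable ℝ g' := fun s => (hder s).differentiableAt
    have hderiv' : ∀ s, deriv g' s = -deriv g (-s) := fun s => (hder s).deriv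
    have hop' : ∀ m, deriv g' m = 0 → ∀ᶠ s in nhds m, deriv g' s = 0 := by
      intro m hm
      rw [hderiv', neg_eq_zero] at hm
      have := (continuous_neg.tendsto m).eventually (hop (-m) hm)
      filter_upwards [this] with s hs
      rw [hderiv', hs, neg_zero]
    have h00' : deriv g' (-t0) = 0 := by rw [hderiv']; simp [h00]
    have := deriv_zero_right g' hgd' hop' (-t0) h00' (-t) (by linarith)
    rw [hderiv', neg_eq_zero] at this
    simpa using this

lemma eq_zero_of_dot3 (T N B v : Fin 3 → ℝ)
    (hTT : dot3 T T = 1) (hNN : dot3 N N = 1) (hBB : dot3 B B = 1)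
    (hTN : dot3 T N = 0) (hTB : dot3 T B = 0) (hNB : dot3 N B = 0)
    (h1 : dot3 T v = 0) (h2 : dot3 N v = 0) (h3 : dot3 B v = 0) : v = 0 := by
  simp only [dot3, Fin.sum_univ_three] at hTT hNN hBB hTN hTB hNB h1 h2 h3
  set M : Matrix (Fin 3) (Fin 3) ℝ := Matrix.of ![T, N, B] with hMdef
  have hM : M * M.transpose = 1 := by
    ext i j
    fin_cases i <;> fin_cases j <;>
      simp [hMdef, Matrix.mul_apply, Matrix.transpose, Matrix.vecHead, Matrix.vecTail, Fin.sum_univ_three, Matrix.one_apply, Function.comp] <;>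
      linarith
  have hM' : M.transpose * M = 1 := mul_eq_one_comm.mp hM
  have hv : M.mulVec v = 0 := by
    ext i
    fin_cases i <;>
      simp [hMdef, Matrix.mulVec, dotProduct, Fin.sum_univ_three] <;>
      linarith
  calc v = (M.transpose * M).mulVec v := by rw [hM']; simp [Matrix.one_mulVec]
    _ = M.transpose.mulVec (M.mulVec v) := by rw [← Matrix.mulVec_mulVec]
    _ = 0 := by rw [hv, Matrix.mulVec_zero]


/-- A unit-speed curve `α` is a rectifying helix — i.e. there are a constant `θ` and a fixed
nonzero vector `V` such that the `F`-constant rectifying field `W = sin θ•T + cos θ•B` is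
orthogonal to `V` along `α` — if and only if `τ/κ` is constant, that is, `α` is a
cylindrical helix. -/
theorem rectifying_helix_iff_cylindrical
    (α T N B : ℝ → (Fin 3 → ℝ)) (κ τ : ℝ → ℝ)
    (hα : ∀ s, deriv α s = T s)
    (hκ : ∀ s, 0 < κ s)
    (hT : ∀ s, deriv T s = κ s • N s)
    (hN : ∀ s, deriv N s = -κ s • T s + τ s • B s)
    (hB : ∀ s, deriv B s = -τ s • N s)
    (hTT : ∀ s, dot3 (T s) (T s) = 1) (hNN : ∀ s, dot3 (N s) (N s) = 1)
    (hBB : ∀ s, dot3 (B s) (B s) = 1)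
    (hTN : ∀ s, dot3 (T s) (N s) = 0) (hTB : ∀ s, dot3 (T s) (B s) = 0)
    (hNB : ∀ s, dot3 (N s) (B s) = 0)
    (hori : ∀ s, B s = crossProduct (T s) (N s)) :
    (∃ θ : ℝ, ∃ V : Fin 3 → ℝ, V ≠ 0 ∧
        ∀ s, dot3 (Real.sin θ • T s + Real.cos θ • B s) V = 0) ↔
      (∃ c : ℝ, ∀ s, τ s / κ s = c) := by
  have hNne : ∀ s, N s ≠ 0 := fun s => dot3_ne_zero_vec (hNN s)
  have hTd : ∀ s, HasDerivAt T (κ s • N s) s := by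
    intro s
    have hne : deriv T s ≠ 0 := by
      rw [hT s]; exact smul_ne_zero (hκ s).ne' (hNne s)
    have := (differentiableAt_of_deriv_ne_zero hne).hasDerivAt
    rwa [hT s] at this
  have hNd : ∀ s, HasDerivAt N (-κ s • T s + τ s • B s) s := by
    intro s
    have hval : dot3 (-κ s • T s + τ s • B s) (T s) = -κ s := by
      have e1 := hTT s
      have e2 := hTB s
      simp only [dot3, Fin.sum_univ_three, Pi.add_apply, Pi.smul_apply, Pi.neg_apply,
        smul_eq_mul, neg_mul, mul_neg] at e1 e2 ⊢
      linear_combination (-(κ s)) * e1 + τ s * e2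
    have hne : deriv N s ≠ 0 := by
      rw [hN s]
      intro h0
      rw [h0] at hval
      simp [dot3] at hval
      exact (hκ s).ne' hval
    have := (differentiableAt_of_deriv_ne_zero hne).hasDerivAt
    rwa [hN s] at this
  have hTc : ∀ s (j : Fin 3), DifferentiableAt ℝ (fun t => T t j) s :=
    fun s j => (hasDerivAt_pi.mp (hTd s) j).differentiableAt
  have hNc : ∀ s (j : Fin 3), DifferentiableAt ℝ (fun t => N t j) s :=
    fun s j => (hasDerivAt_pi.mp (hNd s) j).differentiableAt
  have hBd : ∀ s, HasDerivAt B (-τ s • N s) s := by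
    intro s
    have hBf : B = fun t => ![T t 1 * N t 2 - T t 2 * N t 1,
        T t 2 * N t 0 - T t 0 * N t 2, T t 0 * N t 1 - T t 1 * N t 0] := by
      funext t
      rw [hori t, cross_apply]
    have hdiff : DifferentiableAt ℝ B s := by
      rw [hBf]
      apply differentiableAt_pi.mpr
      intro i
      fin_cases i <;> simp only [Matrix.cons_val_zero, Matrix.cons_val_one, Matrix.head_cons,
        Matrix.cons_val_two, Matrix.tail_cons, Fin.isValue]
      · exact ((hTc s 1).mul (hNc s 2)).sub ((hTc s 2).mul (hNc s 1))
      · exact ((hTc s 2).mul (hNc s 0)).sub ((hTc s 0).mul (hNc s 2))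
      · exact ((hTc s 0).mul (hNc s 1)).sub ((hTc s 1).mul (hNc s 0))
    have := hdiff.hasDerivAt
    rwa [hB s] at this
  constructor
  · rintro ⟨θ, V, hV, hVW⟩
    set g : ℝ → ℝ := fun s => dot3 (T s) V with hgdef
    set h : ℝ → ℝ := fun s => dot3 (N s) V with hhdef
    set k : ℝ → ℝ := fun s => dot3 (B s) V with hkdef
    set u : ℝ → ℝ := fun s => Real.cos θ * g s - Real.sin θ * k s with hudef
    set A : ℝ → ℝ := fun s => κ s * Real.cos θ + τ s * Real.sin θ with hAdef
    set D : ℝ → ℝ := fun s => κ s * Real.sin θ - τ s * Real.cos θ with hDdef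
    set W : ℝ → Fin 3 → ℝ := fun s => Real.sin θ • T s + Real.cos θ • B s with hWdef
    have hw : ∀ s, Real.sin θ * g s + Real.cos θ * k s = 0 := by
      intro s
      have hx := hVW s
      have expand : dot3 (Real.sin θ • T s + Real.cos θ • B s) V
          = Real.sin θ * g s + Real.cos θ * k s := by
        simp only [hgdef, hkdef, dot3, Fin.sum_univ_three, Pi.add_apply, Pi.smul_apply,
          smul_eq_mul]
        ring
      rw [expand] at hx
      exact hx
    have hgd : ∀ s, HasDerivAt g (κ s * h s) s := by
      intro s
      have h0 := hasDerivAt_dot3_s14 (hTd s) V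
      have hval : dot3 (κ s • N s) V = κ s * h s := by
        simp only [hhdef, dot3, Fin.sum_univ_three, Pi.smul_apply, smul_eq_mul]
        ring
      rw [hgdef]
      rw [← hval]
      exact h0
    have hkd : ∀ s, HasDerivAt k (-(τ s) * h s) s := by
      intro s
      have h0 := hasDerivAt_dot3_s14 (hBd s) V
      have hval : dot3 (-τ s • N s) V = -(τ s) * h s := by
        simp only [hhdef, dot3, Fin.sum_univ_three, Pi.smul_apply, smul_eq_mul, Pi.neg_apply,
          neg_mul, mul_neg]
        ring
      rw [hkdef, ← hval]
      exact h0
    have hhd : ∀ s, HasDerivAt h (-(A s) * u s) s := by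
      intro s
      have h0 := hasDerivAt_dot3_s14 (hNd s) V
      have hval : dot3 (-κ s • T s + τ s • B s) V = -(A s) * u s := by
        have e1 := hw s
        have e2 := Real.sin_sq_add_cos_sq θ
        simp only [hAdef, hudef, hgdef, hkdef, dot3, Fin.sum_univ_three, Pi.add_apply,
          Pi.smul_apply, Pi.neg_apply, smul_eq_mul, neg_mul, mul_neg] at e1 ⊢
        linear_combination (-(κ s * Real.sin θ - τ s * Real.cos θ)) * e1 +
          (κ s * (T s 0 * V 0 + T s 1 * V 1 + T s 2 * V 2) -
            τ s * (B s 0 * V 0 + B s 1 * V 1 + B s 2 * V 2)) * e2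
      rw [hhdef, ← hval]
      exact h0
    have hud : ∀ s, HasDerivAt u (A s * h s) s := by
      intro s
      have h0 := ((hgd s).const_mul (Real.cos θ)).sub ((hkd s).const_mul (Real.sin θ))
      rw [hudef]
      convert h0 using 1
      · rfl
      · rfl
      · rfl
      simp only [hAdef]
      ring
    have hPd : ∀ s, HasDerivAt (fun t => u t ^ 2 + h t ^ 2) 0 s := by
      intro s
      have h0 := ((hud s).pow 2).add ((hhd s).pow 2)
      convert h0 using 1
      · rfl
      · rfl
      · rfl
      push_cast
      ring
    have hPconst : ∀ s, u s ^ 2 + h s ^ 2 = u 0 ^ 2 + h 0 ^ 2 := fun s =>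
      is_const_of_deriv_eq_zero (fun t => (hPd t).differentiableAt)
        (fun t => (hPd t).deriv) s 0
    have hr2pos : 0 < u 0 ^ 2 + h 0 ^ 2 := by
      rcases lt_or_eq_of_le (by positivity : (0:ℝ) ≤ u 0 ^ 2 + h 0 ^ 2) with hlt | heq
      · exact hlt
      · exfalso
        have hu0 : u 0 = 0 := by nlinarith [sq_nonneg (u 0), sq_nonneg (h 0)]
        have hh0 : h 0 = 0 := by nlinarith [sq_nonneg (u 0), sq_nonneg (h 0)]
        have e1 := hw 0
        have e3 := Real.sin_sq_add_cos_sq θ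
        simp only [hudef] at hu0
        have hg0 : g 0 = 0 := by
          linear_combination Real.sin θ * e1 + Real.cos θ * hu0 - g 0 * e3
        have hk0 : k 0 = 0 := by
          linear_combination Real.cos θ * e1 - Real.sin θ * hu0 - k 0 * e3
        apply hV
        apply eq_zero_of_dot3 (T 0) (N 0) (B 0) V (hTT 0) (hNN 0) (hBB 0) (hTN 0) (hTB 0) (hNB 0)
        · rw [hgdef] at hg0; exact hg0
        · rw [hhdef] at hh0; exact hh0
        · rw [hkdef] at hk0; exact hk0
    by_cases hcase : ∀ s, h s = 0
    · have hA0 : ∀ s, A s = 0 := by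
        intro s
        have h1 : HasDerivAt h 0 s := by
          have hfz : h = fun _ => (0:ℝ) := funext hcase
          rw [hfz]
          exact hasDerivAt_const s 0
        have h2 := h1.unique (hhd s)
        have hus : u s ≠ 0 := by
          have hp := hPconst s
          rw [hcase s] at hp
          intro h0
          rw [h0] at hp
          simp at hp
          nlinarith [hr2pos]
        rcases mul_eq_zero.mp h2.symm with h' | h'
        · linarith [neg_eq_zero.mp h']
        · exact absurd h' hus
      have hsin : Real.sin θ ≠ 0 := by
        intro h0
        have hA := hA0 0
        simp only [hAdef, h0, mul_zero, add_zero] at hA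
        have hc2 : Real.cos θ ^ 2 = 1 := by
          have := Real.sin_sq_add_cos_sq θ
          rw [h0] at this
          simpa using this
        have hcne : Real.cos θ ≠ 0 := by
          intro h1
          rw [h1] at hc2
          norm_num at hc2
        exact (hκ 0).ne' (by
          rcases mul_eq_zero.mp hA with h' | h'
          · exact h'
          · exact absurd h' hcne)
      refine ⟨-(Real.cos θ / Real.sin θ), fun s => ?_⟩
      have hAs := hA0 s
      simp only [hAdef] at hAs
      rw [div_eq_iff (hκ s).ne', neg_mul]
      field_simp
      linarith [hAs]
    · push_neg at hcase
      obtain ⟨s0, hs0⟩ := hcase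
      have hWd : ∀ s, HasDerivAt W (D s • N s) s := by
        intro s
        have h0 := ((hTd s).const_smul (Real.sin θ)).add ((hBd s).const_smul (Real.cos θ))
        rw [hWdef]
        convert h0 using 1
        · rfl
        · rfl
        · rfl
        · rfl
        funext i
        simp only [hDdef, Pi.add_apply, Pi.smul_apply, Pi.neg_apply, smul_eq_mul, neg_mul,
          mul_neg]
        ring
      have hDh : ∀ s, D s * h s = 0 := by
        intro s
        have hz : HasDerivAt (fun t => dot3 (W t) V) 0 s := by
          have hfz : (fun t => dot3 (W t) V) = fun _ => (0:ℝ) := by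
            funext t
            rw [hWdef]
            exact hVW t
          rw [hfz]
          exact hasDerivAt_const s 0
        have h2 := hasDerivAt_dot3_s14 (hWd s) V
        have h3 := hz.unique h2
        have hval : dot3 (D s • N s) V = D s * h s := by
          simp only [hhdef, dot3, Fin.sum_univ_three, Pi.smul_apply, smul_eq_mul]
          ring
        rw [hval] at h3
        exact h3.symm
      have hDs0 : D s0 = 0 := by
        rcases mul_eq_zero.mp (hDh s0) with h' | h'
        · exact h'
        · exact absurd h' hs0
      have hcos : Real.cos θ ≠ 0 := by
        intro h0
        have hD := hDs0
        simp only [hDdef, h0, mul_zero, sub_zero] at hD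
        have hs2 : Real.sin θ ≠ 0 := by
          intro h1
          have := Real.sin_sq_add_cos_sq θ
          rw [h0, h1] at this
          norm_num at this
        rcases mul_eq_zero.mp hD with h' | h'
        · exact (hκ s0).ne' h'
        · exact hs2 h'
      have hκAD : ∀ s, κ s = A s * Real.cos θ + D s * Real.sin θ := by
        intro s
        simp only [hAdef, hDdef]
        linear_combination (-(κ s)) * (Real.sin_sq_add_cos_sq θ)
      have hWdiff : Differentiable ℝ W := fun s => (hWd s).differentiableAt
      have hWderiv : ∀ s, deriv W s = D s • N s := fun s => (hWd s).deriv
      have hDNzero : ∀ {s : ℝ}, deriv W s = 0 → D s = 0 := by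
        intro s hs
        rw [hWderiv] at hs
        rcases smul_eq_zero.mp hs with h' | h'
        · exact h'
        · exact absurd h' (hNne s)
      have hop : ∀ m, deriv W m = 0 → ∀ᶠ s in nhds m, deriv W s = 0 := by
        intro m hm
        have hDm : D m = 0 := hDNzero hm
        have hAm : A m ≠ 0 := by
          intro h0
          have := hκAD m
          rw [hDm, h0] at this
          simp at this
          exact (hκ m).ne' this
        by_cases hhm : h m = 0
        · have hum : u m ≠ 0 := by
            have hp := hPconst m
            rw [hhm] at hp
            intro h0
            rw [h0] at hp
            simp at hp
            nlinarith [hr2pos]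
          have hL : -(A m) * u m ≠ 0 := mul_ne_zero (neg_ne_zero.mpr hAm) hum
          have hslope := hasDerivAt_iff_tendsto_slope.mp (hhd m)
          have hev : ∀ᶠ s in nhdsWithin m {m}ᶜ, slope h m s ≠ 0 := hslope.eventually_ne hL
          have hev2 : ∀ᶠ s in nhdsWithin m {m}ᶜ, deriv W s = 0 := by
            filter_upwards [hev, self_mem_nhdsWithin] with s hs hsm
            have hhs : h s ≠ 0 := by
              intro h0
              apply hs
              rw [slope_def_field, h0, hhm]
              simp
            have hDs : D s = 0 := by
              rcases mul_eq_zero.mp (hDh s) with h' | h'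
              · exact h'
              · exact absurd h' hhs
            rw [hWderiv, hDs, zero_smul]
          rw [eventually_nhdsWithin_iff] at hev2
          filter_upwards [hev2] with s hs
          by_cases hsm : s = m
          · rw [hsm]; exact hm
          · exact hs hsm
        · have hcont : ContinuousAt h m := (hhd m).differentiableAt.continuousAt
          have hev : ∀ᶠ s in nhds m, h s ≠ 0 := hcont.eventually_ne hhm
          filter_upwards [hev] with s hs
          have hDs : D s = 0 := by
            rcases mul_eq_zero.mp (hDh s) with h' | h'
            · exact h'
            · exact absurd h' hs
          rw [hWderiv, hDs, zero_smul]
      have hW0 : deriv W s0 = 0 := by rw [hWderiv, hDs0, zero_smul]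
      have hall := deriv_zero_all W hWdiff hop s0 hW0
      refine ⟨Real.sin θ / Real.cos θ, fun s => ?_⟩
      have hDs : D s = 0 := hDNzero (hall s)
      simp only [hDdef] at hDs
      rw [div_eq_div_iff (hκ s).ne' hcos]
      linarith [hDs]
  · rintro ⟨c, hc⟩
    have hτ : ∀ s, τ s = c * κ s := by
      intro s
      have hx := hc s
      rw [div_eq_iff (hκ s).ne'] at hx
      exact hx
    refine ⟨Real.arctan c, N 0, hNne 0, fun s => ?_⟩
    have hWd : ∀ t, HasDerivAt
        (fun t => Real.sin (Real.arctan c) • T t + Real.cos (Real.arctan c) • B t) 0 t := by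
      intro t
      have h0 := ((hTd t).const_smul (Real.sin (Real.arctan c))).add
        ((hBd t).const_smul (Real.cos (Real.arctan c)))
      convert h0 using 1
      · rfl
      · rfl
      · rfl
      · rfl
      funext i
      have hsin := Real.sin_arctan c
      have hcos := Real.cos_arctan c
      have hsq : Real.sqrt (1 + c ^ 2) ≠ 0 := by positivity
      simp only [Pi.add_apply, Pi.smul_apply, Pi.neg_apply, Pi.zero_apply, smul_eq_mul,
        neg_mul, mul_neg, hτ t, hsin, hcos]
      field_simp
      ring
    have hWconst := fun s => is_const_of_deriv_eq_zero
      (fun t => (hWd t).differentiableAt) (fun t => (hWd t).deriv) s 0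
    rw [hWconst s]
    have e1 := hTN 0
    have e2 := hNB 0
    simp only [dot3, Fin.sum_univ_three, Pi.add_apply, Pi.smul_apply, smul_eq_mul] at e1 e2 ⊢
    linear_combination Real.sin (Real.arctan c) * e1 + Real.cos (Real.arctan c) * e2
end
end

section
/- Let α be a nonplanar unit-speed curve with curvature κ > 0 and torsion τ, and let a, b, c be real constants with a² + b² + c² = 1. Then the F-constant vector field W = aT + bN + cB is orthogonal to some fixed nonzero direction V if and only if −b·κ²·(τ/κ)' = c·κ·((1−c²)κ² + (1−3a²)τ²) + a·τ·((1−a²)τ² + (1−3c²)κ²) holds identically. -/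
/-!
In Frenet coordinates, differentiation along the curve is `x ↦ x' + d × x`, where
`d = (τ, 0, κ)` are the coordinates of the Darboux vector. For `W` with constant coordinates `w`,
the fields `W'` and `W''` therefore have coordinates `p = d × w` and `q = p' + d × p`.

If `⟨W, V⟩ = 0` for a fixed `V ≠ 0`, then `W'` and `W''` are orthogonal to `V` too, so `w, p, q`
are linearly dependent and `w · (p × q) = 0`. Modulo `a² + b² + c² = 1` this triple product is
the difference of the two sides of the natural equation.

Conversely, suppose the triple product vanishes. If `p` never vanishes, the field `U` with
coordinates `u = w × p` is nowhere zero and has coordinates `w × q` for its derivative, so `U'`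
is parallel to `U`, since `u × (w × q) = (w · p × q) w = 0`. Hence `U / |U|` is a constant
vector orthogonal to `W`. If `p` vanishes somewhere then `b = 0`, and the natural equation reads
`(aκ - cτ)² (aτ + cκ) = 0`. The two factors never vanish together, so by connectedness of `ℝ`
`aκ = cτ` everywhere. Then `W` is constant and `N(0)` is orthogonal to it.
-/

open Real Set
noncomputable section

open Matrix

theorem HasDerivAt.dotProduct {n : Type*} [Fintype n] {u v : ℝ → n → ℝ} {u' v' : n → ℝ}
    {s : ℝ} (hu : HasDerivAt u u' s) (hv : HasDerivAt v v' s) :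
    HasDerivAt (fun r => u r ⬝ᵥ v r) (u' ⬝ᵥ v s + u s ⬝ᵥ v') s := by
  rw [hasDerivAt_pi] at hu hv
  have := HasDerivAt.fun_sum (u := Finset.univ) fun i _ => (hu i).mul (hv i)
  rw [Finset.sum_add_distrib] at this
  exact this

theorem HasDerivAt.crossProduct {u v : ℝ → Fin 3 → ℝ} {u' v' : Fin 3 → ℝ} {s : ℝ}
    (hu : HasDerivAt u u' s) (hv : HasDerivAt v v' s) :
    HasDerivAt (fun r => u r ⨯₃ v r) (u' ⨯₃ v s + u s ⨯₃ v') s := by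
  rw [hasDerivAt_pi] at hu hv ⊢
  intro i
  fin_cases i <;> simp only [cross_apply, Pi.add_apply] <;> simp
  · exact (((hu 1).mul (hv 2)).sub ((hu 2).mul (hv 1))).congr_deriv (by ring)
  · exact (((hu 2).mul (hv 0)).sub ((hu 0).mul (hv 2))).congr_deriv (by ring)
  · exact (((hu 0).mul (hv 1)).sub ((hu 1).mul (hv 0))).congr_deriv (by ring)

theorem dotProduct_eq_zero_of_hasDerivAt {n : Type*} [Fintype n] {X : ℝ → n → ℝ} {X' V : n → ℝ}
    {s : ℝ} (hX : ∀ r, X r ⬝ᵥ V = 0) (h : HasDerivAt X X' s) : X' ⬝ᵥ V = 0 := by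
  have hderiv := h.dotProduct (hasDerivAt_const s V)
  simp only [hX, dotProduct_zero, add_zero] at hderiv
  exact (hasDerivAt_const s 0).unique hderiv |>.symm

theorem hasDerivAt_of_deriv_eq_of_ne_zero {E : Type*} [NormedAddCommGroup E] [NormedSpace ℝ E]
    {f : ℝ → E} {y : E} {s : ℝ} (h : deriv f s = y) (hy : y ≠ 0) : HasDerivAt f y s := by
  subst h
  exact (differentiableAt_of_deriv_ne_zero hy).hasDerivAt

theorem inv_smul_eq_of_hasDerivAt_smul_self {E : Type*} [NormedAddCommGroup E]
    [NormedSpace ℝ E] {U : ℝ → E} {h β : ℝ → ℝ} (hh : ∀ s, HasDerivAt h (β s * h s) s)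
    (hh₀ : ∀ s, h s ≠ 0) (hU : ∀ s, HasDerivAt U (β s • U s) s) (s t : ℝ) :
    (h s)⁻¹ • U s = (h t)⁻¹ • U t := by
  have hderiv : ∀ r, HasDerivAt (fun r => (h r)⁻¹ • U r) 0 r := by
    intro r
    refine (((hh r).inv (hh₀ r)).smul (hU r)).congr_deriv ?_
    have hcoeff : (h r)⁻¹ * β r + -(β r * h r) / h r ^ 2 = 0 := by
      field_simp [hh₀ r]
      ring
    rw [smul_smul, ← add_smul, Pi.inv_apply, hcoeff, zero_smul]
  exact is_const_of_deriv_eq_zero (fun r => (hderiv r).differentiableAt)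
    (fun r => (hderiv r).deriv) s t

theorem exists_smul_eq_of_hasDerivAt_smul_self {n : Type*} [Fintype n] {U : ℝ → n → ℝ}
    {β : ℝ → ℝ} (hU : ∀ s, HasDerivAt U (β s • U s) s) (hU₀ : ∀ s, U s ≠ 0) (s t : ℝ) :
    ∃ r : ℝ, U t = r • U s := by
  have hpos : ∀ s, 0 < √(U s ⬝ᵥ U s) := fun s => by
    simpa using dotProduct_self_star_pos_iff.2 (hU₀ s)
  have hnorm : ∀ s, HasDerivAt (fun r => √(U r ⬝ᵥ U r)) (β s * √(U s ⬝ᵥ U s)) s := by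
    intro s
    refine (((hU s).dotProduct (hU s)).sqrt ?_).congr_deriv ?_
    · exact (Real.sqrt_pos.1 (hpos s)).ne'
    · have := Real.sq_sqrt (Real.sqrt_pos.1 (hpos s)).le
      simp only [smul_dotProduct, dotProduct_smul, smul_eq_mul]
      rw [div_eq_iff (mul_pos two_pos (hpos s)).ne']
      linear_combination (-2 * β s) * this
  have hconst := inv_smul_eq_of_hasDerivAt_smul_self hnorm (fun s => (hpos s).ne') hU s t
  refine ⟨√(U t ⬝ᵥ U t) / √(U s ⬝ᵥ U s), ?_⟩
  rw [div_eq_mul_inv, mul_smul, hconst, smul_inv_smul₀ (hpos t).ne']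

section OrthogonalGroup

variable {n : Type*} [Fintype n] [DecidableEq n] {F : Matrix n n ℝ}

theorem vecMul_dotProduct_vecMul_of_mem_orthogonalGroup (hF : F ∈ orthogonalGroup n ℝ)
    (x y : n → ℝ) : x ᵥ* F ⬝ᵥ y ᵥ* F = x ⬝ᵥ y := by
  rw [← dotProduct_mulVec, ← vecMul_transpose, vecMul_vecMul, (mem_orthogonalGroup_iff _ _).1 hF,
    vecMul_one]

theorem vecMul_ne_zero_of_mem_orthogonalGroup (hF : F ∈ orthogonalGroup n ℝ) {x : n → ℝ}
    (hx : x ≠ 0) : x ᵥ* F ≠ 0 := by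
  intro h
  rw [← vecMul_one x, ← (mem_orthogonalGroup_iff _ _).1 hF, ← vecMul_vecMul, h, zero_vecMul] at hx
  exact hx rfl

theorem mulVec_ne_zero_of_mem_orthogonalGroup (hF : F ∈ orthogonalGroup n ℝ) {v : n → ℝ}
    (hv : v ≠ 0) : F *ᵥ v ≠ 0 := by
  intro h
  rw [← one_mulVec v, ← (mem_orthogonalGroup_iff' _ _).1 hF, ← mulVec_mulVec, h, mulVec_zero] at hv
  exact hv rfl

end OrthogonalGroup

theorem exists_smul_eq_of_cross_eq_zero {x y : Fin 3 → ℝ} (hx : x ≠ 0) (h : x ⨯₃ y = 0) :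
    ∃ r : ℝ, r • x = y := by
  by_contra! hne
  exact crossProduct_ne_zero_iff_linearIndependent.2 ((LinearIndependent.pair_iff' hx).2 hne) h

theorem forall_eq_zero_or_forall_eq_zero {X : Type*} [TopologicalSpace X] [PreconnectedSpace X]
    {f g : X → ℝ} (hf : Continuous f) (hg : Continuous g) (hfg : ∀ x, f x = 0 ∨ g x = 0)
    (hfg' : ∀ x, f x ≠ 0 ∨ g x ≠ 0) : (∀ x, f x = 0) ∨ ∀ x, g x = 0 := by
  have hcompl : {x | f x = 0} = {x | g x = 0}ᶜ := by
    ext x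
    have := hfg x
    have := hfg' x
    change f x = 0 ↔ ¬g x = 0
    tauto
  have hclopen : IsClopen {x | f x = 0} :=
    ⟨isClosed_eq hf continuous_const, hcompl ▸ (isClosed_eq hg continuous_const).isOpen_compl⟩
  rcases isClopen_iff.1 hclopen with hempty | huniv
  · right
    intro x
    have hx : x ∉ {x | f x = 0} := hempty ▸ notMem_empty x
    exact (hfg x).resolve_left hx
  · exact Or.inl fun x => (huniv ▸ mem_univ x : x ∈ {x | f x = 0})

def frame (T N B : ℝ → Fin 3 → ℝ) (s : ℝ) : Matrix (Fin 3) (Fin 3) ℝ := ![T s, N s, B s]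

/-- Frenet coordinates `(τ, 0, κ)` of the Darboux vector `τ T + κ B`: a field with Frenet
coordinates `x` has derivative with Frenet coordinates `x' + darboux κ τ s ⨯₃ x`. -/
def darboux (κ τ : ℝ → ℝ) (s : ℝ) : Fin 3 → ℝ := ![τ s, 0, κ s]

structure HasFrenetDerivatives (T N B : ℝ → Fin 3 → ℝ) (κ τ : ℝ → ℝ) : Prop where
  hasDerivAt_T : ∀ s, HasDerivAt T (κ s • N s) s
  hasDerivAt_N : ∀ s, HasDerivAt N (-κ s • T s + τ s • B s) s
  hasDerivAt_B : ∀ s, HasDerivAt B (-τ s • N s) s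

-- Frenet coordinates of `W'` and `W''` for the field `W` with constant Frenet coordinates `w`.
def derivCoords (κ τ : ℝ → ℝ) (w : Fin 3 → ℝ) (s : ℝ) : Fin 3 → ℝ := darboux κ τ s ⨯₃ w

def deriv2Coords (κ τ : ℝ → ℝ) (w : Fin 3 → ℝ) (s : ℝ) : Fin 3 → ℝ :=
  darboux (deriv κ) (deriv τ) s ⨯₃ w + darboux κ τ s ⨯₃ derivCoords κ τ w s

section Frenet

variable {T N B : ℝ → Fin 3 → ℝ} {κ τ : ℝ → ℝ}

theorem vecMul_frame (x : Fin 3 → ℝ) (s : ℝ) :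
    x ᵥ* frame T N B s = x 0 • T s + x 1 • N s + x 2 • B s := by
  rw [vecMul_eq_sum, Fin.sum_univ_three]
  rfl

theorem frame_mem_orthogonalGroup {s : ℝ} (hTT : T s ⬝ᵥ T s = 1) (hNN : N s ⬝ᵥ N s = 1)
    (hBB : B s ⬝ᵥ B s = 1) (hTN : T s ⬝ᵥ N s = 0) (hTB : T s ⬝ᵥ B s = 0)
    (hNB : N s ⬝ᵥ B s = 0) : frame T N B s ∈ orthogonalGroup (Fin 3) ℝ := by
  rw [mem_orthogonalGroup_iff]
  ext i j
  rw [mul_apply_eq_vecMul, vecMul_transpose]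
  fin_cases i <;> fin_cases j <;> simp [frame, mulVec, dotProduct_comm, *]

theorem hasDerivAt_darboux {s : ℝ} (hκ : DifferentiableAt ℝ κ s) (hτ : DifferentiableAt ℝ τ s) :
    HasDerivAt (darboux κ τ) (darboux (deriv κ) (deriv τ) s) s := by
  rw [hasDerivAt_pi]
  intro i
  fin_cases i
  · exact hτ.hasDerivAt
  · exact hasDerivAt_const s 0
  · exact hκ.hasDerivAt

theorem hasDerivAt_derivCoords {s : ℝ} (hκ : DifferentiableAt ℝ κ s)
    (hτ : DifferentiableAt ℝ τ s) (w : Fin 3 → ℝ) :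
    HasDerivAt (derivCoords κ τ w) (darboux (deriv κ) (deriv τ) s ⨯₃ w) s := by
  have h := (hasDerivAt_darboux hκ hτ).crossProduct (hasDerivAt_const s w)
  rw [map_zero, add_zero] at h
  exact h

theorem triple_product_derivCoords_of_apply_one_eq_zero {w : Fin 3 → ℝ} (hw : w 1 = 0) (s : ℝ) :
    w ⬝ᵥ derivCoords κ τ w s ⨯₃ deriv2Coords κ τ w s =
      (κ s * w 0 - τ s * w 2) ^ 2 * (τ s * w 0 + κ s * w 2) := by
  simp [derivCoords, deriv2Coords, darboux, cross_apply, vecHead, vecTail, hw]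
  ring

theorem forall_derivCoords_eq_zero_of_exists (hκ : Continuous κ) (hτ : Continuous τ)
    (hτ₀ : ∀ s, τ s ≠ 0) {w : Fin 3 → ℝ} (hw : w ≠ 0)
    (htriple : ∀ s, w ⬝ᵥ derivCoords κ τ w s ⨯₃ deriv2Coords κ τ w s = 0)
    (h₀ : ∃ s₀, derivCoords κ τ w s₀ = 0) (s : ℝ) : derivCoords κ τ w s = 0 := by
  obtain ⟨s₀, hs₀⟩ := h₀
  have hcoord : ∀ s, derivCoords κ τ w s = ![-(κ s * w 1), κ s * w 0 - τ s * w 2, τ s * w 1] := by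
    intro s
    simp [derivCoords, darboux, cross_apply]
  have hw₁ : w 1 = 0 := by
    have := congrFun (hcoord s₀ ▸ hs₀) 2
    simpa [hτ₀ s₀] using this
  have hw₀₂ : 0 < w 0 ^ 2 + w 2 ^ 2 := by
    have := dotProduct_self_star_pos_iff.2 hw
    simpa [vec3_dotProduct, hw₁, sq] using this
  set f := fun s => κ s * w 0 - τ s * w 2
  set g := fun s => τ s * w 0 + κ s * w 2
  have hfg : ∀ s, f s = 0 ∨ g s = 0 := fun s => by
    have := triple_product_derivCoords_of_apply_one_eq_zero hw₁ s ▸ htriple s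
    simpa [f, g] using this
  have hfg' : ∀ s, f s ≠ 0 ∨ g s ≠ 0 := fun s => by
    by_contra! h
    have hsum : f s ^ 2 + g s ^ 2 = (w 0 ^ 2 + w 2 ^ 2) * (κ s ^ 2 + τ s ^ 2) := by ring
    rw [h.1, h.2] at hsum
    have hτs := hτ₀ s
    have hpos : 0 < (w 0 ^ 2 + w 2 ^ 2) * (κ s ^ 2 + τ s ^ 2) := by positivity
    linarith
  rcases forall_eq_zero_or_forall_eq_zero (by fun_prop) (by fun_prop) hfg hfg' with hf | hg
  · rw [hcoord]
    simpa [hw₁, f, sub_eq_zero] using hf s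
  · have := congrFun (hcoord s₀ ▸ hs₀) 1
    exact ((hfg' s₀).resolve_right (not_not.2 (hg s₀)) (by simpa using this)).elim

namespace HasFrenetDerivatives

theorem hasDerivAt_vecMul_frame (h : HasFrenetDerivatives T N B κ τ) {x : ℝ → Fin 3 → ℝ}
    {x' : Fin 3 → ℝ} {s : ℝ} (hx : HasDerivAt x x' s) :
    HasDerivAt (fun r => x r ᵥ* frame T N B r)
      ((x' + darboux κ τ s ⨯₃ x s) ᵥ* frame T N B s) s := by
  simp only [vecMul_frame]
  rw [hasDerivAt_pi] at hx
  refine ((((hx 0).smul (h.hasDerivAt_T s)).add ((hx 1).smul (h.hasDerivAt_N s))).add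
    ((hx 2).smul (h.hasDerivAt_B s))).congr_deriv ?_
  ext i
  simp [darboux, cross_apply]
  ring

theorem hasDerivAt_vecMul_frame_const (h : HasFrenetDerivatives T N B κ τ) (w : Fin 3 → ℝ)
    (s : ℝ) :
    HasDerivAt (fun r => w ᵥ* frame T N B r) (derivCoords κ τ w s ᵥ* frame T N B s) s := by
  simpa [derivCoords] using h.hasDerivAt_vecMul_frame (hasDerivAt_const s w)

theorem hasDerivAt_derivCoords_vecMul_frame (h : HasFrenetDerivatives T N B κ τ) {s : ℝ}
    (hκ : DifferentiableAt ℝ κ s) (hτ : DifferentiableAt ℝ τ s) (w : Fin 3 → ℝ) :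
    HasDerivAt (fun r => derivCoords κ τ w r ᵥ* frame T N B r)
      (deriv2Coords κ τ w s ᵥ* frame T N B s) s :=
  h.hasDerivAt_vecMul_frame (hasDerivAt_derivCoords hκ hτ w)

theorem triple_product_eq_zero_of_orthogonal (h : HasFrenetDerivatives T N B κ τ)
    (hO : ∀ s, frame T N B s ∈ orthogonalGroup (Fin 3) ℝ) (hκ : Differentiable ℝ κ)
    (hτ : Differentiable ℝ τ) {w V : Fin 3 → ℝ} (hV : V ≠ 0)
    (hW : ∀ s, w ᵥ* frame T N B s ⬝ᵥ V = 0) (s : ℝ) :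
    w ⬝ᵥ derivCoords κ τ w s ⨯₃ deriv2Coords κ τ w s = 0 := by
  have hW' : ∀ r, derivCoords κ τ w r ᵥ* frame T N B r ⬝ᵥ V = 0 := fun r =>
    dotProduct_eq_zero_of_hasDerivAt hW (h.hasDerivAt_vecMul_frame_const w r)
  have hW'' : deriv2Coords κ τ w s ᵥ* frame T N B s ⬝ᵥ V = 0 :=
    dotProduct_eq_zero_of_hasDerivAt hW' (h.hasDerivAt_derivCoords_vecMul_frame (hκ s) (hτ s) w)
  rw [triple_product_eq_det]
  refine exists_mulVec_eq_zero_iff.1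
    ⟨frame T N B s *ᵥ V, mulVec_ne_zero_of_mem_orthogonalGroup (hO s) hV, ?_⟩
  ext i
  fin_cases i
  · exact (dotProduct_mulVec _ _ _).trans (hW s)
  · exact (dotProduct_mulVec _ _ _).trans (hW' s)
  · exact (dotProduct_mulVec _ _ _).trans hW''

theorem exists_orthogonal_of_derivCoords_ne_zero (h : HasFrenetDerivatives T N B κ τ)
    (hO : ∀ s, frame T N B s ∈ orthogonalGroup (Fin 3) ℝ) (hκ : Differentiable ℝ κ)
    (hτ : Differentiable ℝ τ) {w : Fin 3 → ℝ} (hw : w ≠ 0)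
    (htriple : ∀ s, w ⬝ᵥ derivCoords κ τ w s ⨯₃ deriv2Coords κ τ w s = 0)
    (hp : ∀ s, derivCoords κ τ w s ≠ 0) : ∃ V ≠ 0, ∀ s, w ᵥ* frame T N B s ⬝ᵥ V = 0 := by
  set u := fun s => w ⨯₃ derivCoords κ τ w s with hu
  have hu₀ : ∀ s, u s ≠ 0 := by
    intro s hs
    have hwp : w ⬝ᵥ derivCoords κ τ w s = 0 := dot_cross_self _ _
    have := congrArg (fun x => x ⬝ᵥ x) hs
    simp only [hu, cross_dot_cross, hwp, zero_mul, sub_zero, dotProduct_zero] at this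
    rcases mul_eq_zero.1 this with h | h
    · exact hw (dotProduct_self_eq_zero.1 h)
    · exact hp s (dotProduct_self_eq_zero.1 h)
  have hparallel : ∀ s, ∃ β : ℝ, β • u s = w ⨯₃ deriv2Coords κ τ w s := by
    intro s
    refine exists_smul_eq_of_cross_eq_zero (hu₀ s) ?_
    rw [cross_cross_eq_smul_sub_smul', hu, dot_self_cross, dotProduct_comm,
      triple_product_permutation, htriple s]
    simp
  choose β hβ using hparallel
  have hU : ∀ s, HasDerivAt (fun r => u r ᵥ* frame T N B r) (β s • (u s ᵥ* frame T N B s)) s := by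
    intro s
    have hu' := (hasDerivAt_const s w).crossProduct (hasDerivAt_derivCoords (hκ s) (hτ s) w)
    refine (h.hasDerivAt_vecMul_frame hu').congr_deriv ?_
    rw [← smul_vecMul, hβ, deriv2Coords, map_add, leibniz_cross (darboux κ τ s),
      show darboux κ τ s ⨯₃ w = derivCoords κ τ w s from rfl, cross_self]
    simp only [map_zero, LinearMap.zero_apply, zero_add]
  refine ⟨u 0 ᵥ* frame T N B 0, vecMul_ne_zero_of_mem_orthogonalGroup (hO 0) (hu₀ 0), fun s => ?_⟩
  obtain ⟨r, hr⟩ := exists_smul_eq_of_hasDerivAt_smul_self hU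
    (fun s => vecMul_ne_zero_of_mem_orthogonalGroup (hO s) (hu₀ s)) s 0
  rw [hr, dotProduct_smul, vecMul_dotProduct_vecMul_of_mem_orthogonalGroup (hO s), hu,
    dot_self_cross, smul_zero]

theorem exists_orthogonal_of_derivCoords_eq_zero (h : HasFrenetDerivatives T N B κ τ)
    (hO : ∀ s, frame T N B s ∈ orthogonalGroup (Fin 3) ℝ) (hτ₀ : ∀ s, τ s ≠ 0) {w : Fin 3 → ℝ}
    (hp : ∀ s, derivCoords κ τ w s = 0) : ∃ V ≠ 0, ∀ s, w ᵥ* frame T N B s ⬝ᵥ V = 0 := by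
  have hconst : ∀ s, HasDerivAt (fun r => w ᵥ* frame T N B r) 0 s := fun s => by
    simpa [hp s] using h.hasDerivAt_vecMul_frame_const w s
  have hw₁ : w 1 = 0 := by
    have := congrFun (hp 0) 2
    simpa [derivCoords, darboux, cross_apply, hτ₀ 0] using this
  refine ⟨![0, 1, 0] ᵥ* frame T N B 0,
    vecMul_ne_zero_of_mem_orthogonalGroup (hO 0) (by simp), fun s => ?_⟩
  rw [is_const_of_deriv_eq_zero (fun r => (hconst r).differentiableAt)
    (fun r => (hconst r).deriv) s 0, vecMul_dotProduct_vecMul_of_mem_orthogonalGroup (hO 0)]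
  simp
  exact hw₁

theorem exists_orthogonal_iff (h : HasFrenetDerivatives T N B κ τ)
    (hO : ∀ s, frame T N B s ∈ orthogonalGroup (Fin 3) ℝ) (hκ : Differentiable ℝ κ)
    (hτ : Differentiable ℝ τ) (hτ₀ : ∀ s, τ s ≠ 0) {w : Fin 3 → ℝ} (hw : w ≠ 0) :
    (∃ V ≠ 0, ∀ s, w ᵥ* frame T N B s ⬝ᵥ V = 0) ↔
      ∀ s, w ⬝ᵥ derivCoords κ τ w s ⨯₃ deriv2Coords κ τ w s = 0 := by
  refine ⟨fun ⟨V, hV, hW⟩ => h.triple_product_eq_zero_of_orthogonal hO hκ hτ hV hW,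
    fun htriple => ?_⟩
  by_cases hp : ∀ s, derivCoords κ τ w s ≠ 0
  · exact h.exists_orthogonal_of_derivCoords_ne_zero hO hκ hτ hw htriple hp
  · push Not at hp
    exact h.exists_orthogonal_of_derivCoords_eq_zero hO hτ₀
      (forall_derivCoords_eq_zero_of_exists hκ.continuous hτ.continuous hτ₀ hw htriple hp)

end HasFrenetDerivatives

theorem natural_equation_iff_triple_product_eq_zero {a b c s : ℝ}
    (habc : a ^ 2 + b ^ 2 + c ^ 2 = 1) (hκ : κ s ≠ 0) (hκd : DifferentiableAt ℝ κ s)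
    (hτd : DifferentiableAt ℝ τ s) :
    -b * (κ s)^2 * deriv (fun u => τ u / κ u) s =
        c * κ s * ((1 - c^2) * (κ s)^2 + (1 - 3*a^2) * (τ s)^2) +
          a * τ s * ((1 - a^2) * (τ s)^2 + (1 - 3*c^2) * (κ s)^2) ↔
      ![a, b, c] ⬝ᵥ derivCoords κ τ ![a, b, c] s ⨯₃ deriv2Coords κ τ ![a, b, c] s = 0 := by
  have hlhs : -b * (κ s)^2 * deriv (fun u => τ u / κ u) s =
      b * (τ s * deriv κ s - κ s * deriv τ s) := by
    rw [deriv_fun_div hτd hκd hκ]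
    field_simp
    ring
  have htriple : ![a, b, c] ⬝ᵥ derivCoords κ τ ![a, b, c] s ⨯₃ deriv2Coords κ τ ![a, b, c] s =
      c * κ s * ((1 - c^2) * (κ s)^2 + (1 - 3*a^2) * (τ s)^2) +
          a * τ s * ((1 - a^2) * (τ s)^2 + (1 - 3*c^2) * (κ s)^2) -
        b * (τ s * deriv κ s - κ s * deriv τ s) := by
    simp [derivCoords, deriv2Coords, darboux, cross_apply]
    linear_combination (c * κ s * τ s ^ 2 + c * κ s ^ 3 - b * τ s * deriv κ s
      + b * κ s * deriv τ s + a * τ s ^ 3 + a * κ s ^ 2 * τ s) * habc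
  rw [hlhs, htriple, sub_eq_zero, eq_comm]

end Frenet

theorem general_helix_natural_equation_general
    (T N B : ℝ → (Fin 3 → ℝ)) (κ τ : ℝ → ℝ) (a b c : ℝ)
    (habc : a^2 + b^2 + c^2 = 1)
    (hκ : ∀ s, 0 < κ s) (hτ : ∀ s, τ s ≠ 0)
    (hκd : Differentiable ℝ κ) (hτd : Differentiable ℝ τ)
    (hT : ∀ s, deriv T s = κ s • N s)
    (hN : ∀ s, deriv N s = -κ s • T s + τ s • B s)
    (hB : ∀ s, deriv B s = -τ s • N s)
    (hTT : ∀ s, dot3 (T s) (T s) = 1) (hNN : ∀ s, dot3 (N s) (N s) = 1)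
    (hBB : ∀ s, dot3 (B s) (B s) = 1)
    (hTN : ∀ s, dot3 (T s) (N s) = 0) (hTB : ∀ s, dot3 (T s) (B s) = 0)
    (hNB : ∀ s, dot3 (N s) (B s) = 0) :
    (∃ V : Fin 3 → ℝ, V ≠ 0 ∧
        ∀ s, dot3 (a • T s + b • N s + c • B s) V = 0) ↔
      (∀ s, -b * (κ s)^2 * deriv (fun u => τ u / κ u) s =
        c * κ s * ((1 - c^2) * (κ s)^2 + (1 - 3*a^2) * (τ s)^2) +
          a * τ s * ((1 - a^2) * (τ s)^2 + (1 - 3*c^2) * (κ s)^2)) := by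
  have hO : ∀ s, frame T N B s ∈ orthogonalGroup (Fin 3) ℝ := fun s =>
    frame_mem_orthogonalGroup (hTT s) (hNN s) (hBB s) (hTN s) (hTB s) (hNB s)
  have hF : HasFrenetDerivatives T N B κ τ := by
    refine ⟨fun s => hasDerivAt_of_deriv_eq_of_ne_zero (hT s) ?_,
      fun s => hasDerivAt_of_deriv_eq_of_ne_zero (hN s) ?_,
      fun s => hasDerivAt_of_deriv_eq_of_ne_zero (hB s) ?_⟩
    · simpa [vecMul_frame] using
        vecMul_ne_zero_of_mem_orthogonalGroup (hO s) (x := ![0, κ s, 0]) (by simp [(hκ s).ne'])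
    · simpa [vecMul_frame] using
        vecMul_ne_zero_of_mem_orthogonalGroup (hO s) (x := ![-κ s, 0, τ s]) (by simp [hτ s])
    · simpa [vecMul_frame] using
        vecMul_ne_zero_of_mem_orthogonalGroup (hO s) (x := ![0, -τ s, 0]) (by simp [hτ s])
  have hw : ![a, b, c] ≠ 0 := by
    intro h
    simp only [cons_eq_zero_iff, zero_empty, and_true] at h
    simp [h] at habc
  have hW : ∀ s, a • T s + b • N s + c • B s = ![a, b, c] ᵥ* frame T N B s := fun s => by
    simp [vecMul_frame]
  change (∃ V, V ≠ 0 ∧ ∀ s, (a • T s + b • N s + c • B s) ⬝ᵥ V = 0) ↔ _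
  simp only [hW]
  rw [hF.exists_orthogonal_iff hO hκd hτd hτ hw]
  exact forall_congr' fun s =>
    (natural_equation_iff_triple_product_eq_zero habc (hκ s).ne' (hκd s) (hτd s)).symm

/-- Natural equation of general helices: for a nonplanar unit-speed curve `α` with
curvature `κ > 0`, nowhere-zero torsion `τ`, and real constants `a, b, c` with
`a² + b² + c² = 1`, the `F`-constant field `W = a•T + b•N + c•B` is orthogonal to some
fixed nonzero direction `V` if and only if
`−b·κ²·(τ/κ)' = c·κ·((1−c²)κ² + (1−3a²)τ²) + a·τ·((1−a²)τ² + (1−3c²)κ²)` identically. -/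
theorem general_helix_natural_equation
    (α T N B : ℝ → (Fin 3 → ℝ)) (κ τ : ℝ → ℝ) (a b c : ℝ)
    (habc : a^2 + b^2 + c^2 = 1)
    (hα : ∀ s, deriv α s = T s)
    (hκ : ∀ s, 0 < κ s) (hτ : ∀ s, τ s ≠ 0)
    (hκd : Differentiable ℝ κ) (hτd : Differentiable ℝ τ)
    (hT : ∀ s, deriv T s = κ s • N s)
    (hN : ∀ s, deriv N s = -κ s • T s + τ s • B s)
    (hB : ∀ s, deriv B s = -τ s • N s)
    (hTT : ∀ s, dot3 (T s) (T s) = 1) (hNN : ∀ s, dot3 (N s) (N s) = 1)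
    (hBB : ∀ s, dot3 (B s) (B s) = 1)
    (hTN : ∀ s, dot3 (T s) (N s) = 0) (hTB : ∀ s, dot3 (T s) (B s) = 0)
    (hNB : ∀ s, dot3 (N s) (B s) = 0)
    (hori : ∀ s, B s = crossProduct (T s) (N s)) :
    (∃ V : Fin 3 → ℝ, V ≠ 0 ∧
        ∀ s, dot3 (a • T s + b • N s + c • B s) V = 0) ↔
      (∀ s, -b * (κ s)^2 * deriv (fun u => τ u / κ u) s =
        c * κ s * ((1 - c^2) * (κ s)^2 + (1 - 3*a^2) * (τ s)^2) +
          a * τ s * ((1 - a^2) * (τ s)^2 + (1 - 3*c^2) * (κ s)^2)) :=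
  general_helix_natural_equation_general T N B κ τ a b c habc hκ hτ hκd hτd hT hN hB hTT hNN hBB hTN
    hTB hNB
end
end

section
/- For the unit-speed curve α on the unit circular cylinder satisfying the normal-helix equations with κ_β ≡ 1, the angle function is φ(s) = arctan(tan θ·s), and then t(s) = cot θ·arcsinh(tan θ·s) + t₀ and z(s) = cot θ·√(1 + tan²θ·s²) + z₀; i.e., φ' = tan θ·cos²φ, t' = cos φ, z' = sin φ with φ(0) = 0. -/
open Real Set
noncomputable section

/-- Solution of the normal-helix ODE system on the unit circular cylinder (`κ_β ≡ 1`):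
the functions `φ(s) = arctan(tan θ·s)`, `t(s) = cot θ·arcsinh(tan θ·s) + t₀`,
`z(s) = cot θ·√(1 + tan²θ·s²) + z₀` satisfy `φ' = tan θ·cos²φ`, `t' = cos φ`,
`z' = sin φ` with `φ(0) = 0`, `t(0) = t₀`, `z(0) = cot θ + z₀`; and conversely any
differentiable solution of this initial value problem is given by these formulas. -/
theorem normal_helix_circular_cylinder_ode
    (θ t₀ z₀ : ℝ) (hθ : θ ∈ Ioo 0 (π/2)) :
    -- the explicit formulas solve the ODE system with the initial conditions
    ((∀ s, deriv (fun s => Real.arctan (Real.tan θ * s)) s =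
        Real.tan θ * (Real.cos (Real.arctan (Real.tan θ * s)))^2) ∧
      (∀ s, deriv (fun s => Real.cot θ * Real.arsinh (Real.tan θ * s) + t₀) s =
        Real.cos (Real.arctan (Real.tan θ * s))) ∧
      (∀ s, deriv (fun s => Real.cot θ * Real.sqrt (1 + (Real.tan θ)^2 * s^2) + z₀) s =
        Real.sin (Real.arctan (Real.tan θ * s))) ∧
      Real.arctan (Real.tan θ * 0) = 0 ∧
      Real.cot θ * Real.arsinh (Real.tan θ * 0) + t₀ = t₀ ∧
      Real.cot θ * Real.sqrt (1 + (Real.tan θ)^2 * 0^2) + z₀ = Real.cot θ + z₀) ∧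
    -- and every differentiable solution of the IVP is given by these formulas
    (∀ φ t z : ℝ → ℝ, Differentiable ℝ φ → Differentiable ℝ t → Differentiable ℝ z →
      (∀ s, deriv φ s = Real.tan θ * (Real.cos (φ s))^2) →
      (∀ s, deriv t s = Real.cos (φ s)) →
      (∀ s, deriv z s = Real.sin (φ s)) →
      φ 0 = 0 → t 0 = t₀ → z 0 = Real.cot θ + z₀ →
      ∀ s, φ s = Real.arctan (Real.tan θ * s) ∧
        t s = Real.cot θ * Real.arsinh (Real.tan θ * s) + t₀ ∧
        z s = Real.cot θ * Real.sqrt (1 + (Real.tan θ)^2 * s^2) + z₀) := by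
  obtain ⟨hθ0, hθ2⟩ := hθ
  set a := Real.tan θ with ha_def
  have ha : 0 < a := Real.tan_pos_of_pos_of_lt_pi_div_two hθ0 hθ2
  have hcosθ : 0 < Real.cos θ := Real.cos_pos_of_mem_Ioo ⟨by linarith [pi_pos], hθ2⟩
  have hsinθ : 0 < Real.sin θ := Real.sin_pos_of_pos_of_lt_pi hθ0 (by linarith [pi_pos])
  have hcot : Real.cot θ * a = 1 := by
    rw [Real.cot_eq_cos_div_sin, ha_def, Real.tan_eq_sin_div_cos]
    field_simp
  have hpos : ∀ s : ℝ, (0:ℝ) < 1 + a^2 * s^2 := fun s => by positivity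
  have hsq : ∀ s : ℝ, (a * s)^2 = a^2 * s^2 := fun s => by ring
  -- derivative of φ formula
  have hlin : ∀ s : ℝ, HasDerivAt (fun s : ℝ => a * s) a s := fun s => by
    simpa using (hasDerivAt_id s).const_mul a
  have hDφ : ∀ s, HasDerivAt (fun s => Real.arctan (a * s))
      (a * (Real.cos (Real.arctan (a * s)))^2) s := by
    intro s
    have := (Real.hasDerivAt_arctan (a * s)).comp s (hlin s)
    refine this.congr_deriv ?_
    rw [Real.cos_sq_arctan]
    ring
  have hDt : ∀ s, HasDerivAt (fun s => Real.cot θ * Real.arsinh (a * s) + t₀)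
      (Real.cos (Real.arctan (a * s))) s := by
    intro s
    have h2 := (((Real.hasDerivAt_arsinh (a * s)).comp s (hlin s)).const_mul
      (Real.cot θ)).add_const t₀
    refine h2.congr_deriv ?_
    rw [Real.cos_arctan, one_div,
      show Real.cot θ * ((Real.sqrt (1 + (a*s)^2))⁻¹ * a)
        = (Real.cot θ * a) * (Real.sqrt (1 + (a*s)^2))⁻¹ from by ring, hcot, one_mul]
  have hDz : ∀ s, HasDerivAt (fun s => Real.cot θ * Real.sqrt (1 + a^2 * s^2) + z₀)
      (Real.sin (Real.arctan (a * s))) s := by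
    intro s
    have hin : HasDerivAt (fun s : ℝ => 1 + a^2 * s^2) (a^2 * (2 * s)) s := by
      simpa using ((hasDerivAt_pow 2 s).const_mul (a^2)).const_add 1
    have hsqrt := (Real.hasDerivAt_sqrt (hpos s).ne').comp s hin
    have h2 := (hsqrt.const_mul (Real.cot θ)).add_const z₀
    refine h2.congr_deriv ?_
    rw [Real.sin_arctan, hsq s]
    have hS : 0 < Real.sqrt (1 + a^2 * s^2) := Real.sqrt_pos.mpr (hpos s)
    rw [show Real.cot θ * (1 / (2 * Real.sqrt (1 + a^2 * s^2)) * (a^2 * (2 * s)))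
        = (Real.cot θ * a) * (a * s / Real.sqrt (1 + a^2 * s^2)) from by
      field_simp, hcot, one_mul]
  refine ⟨⟨fun s => (hDφ s).deriv, fun s => (hDt s).deriv, fun s => (hDz s).deriv,
    by simp, by simp, by simp⟩, ?_⟩
  intro φ t z hφ ht hz hφ' ht' hz' hφ0 ht0 hz0
  -- Lipschitz bound for the vector field
  have hcossq : Differentiable ℝ (fun y : ℝ => a * Real.cos y ^ 2) :=
    (Real.differentiable_cos.pow 2).const_mul a
  have hvd : ∀ y : ℝ, HasDerivAt (fun y : ℝ => a * Real.cos y ^ 2)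
      (a * (2 * Real.cos y ^ 1 * (-Real.sin y))) y := fun y =>
    ((Real.hasDerivAt_cos y).pow 2).const_mul a
  have hlip : LipschitzWith (Real.toNNReal (2 * a)) (fun y : ℝ => a * Real.cos y ^ 2) := by
    apply lipschitzWith_of_nnnorm_deriv_le hcossq
    intro y
    rw [← NNReal.coe_le_coe, coe_nnnorm, Real.coe_toNNReal _ (by positivity), (hvd y).deriv,
      Real.norm_eq_abs, abs_mul, abs_mul, abs_mul, abs_neg, abs_of_pos ha]
    have h1 : |Real.cos y| ≤ 1 := abs_cos_le_one y
    have h2 : |Real.sin y| ≤ 1 := abs_sin_le_one y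
    rw [pow_one, abs_two]
    have h4 : |Real.cos y| * |Real.sin y| ≤ 1 := by
      nlinarith [abs_nonneg (Real.cos y), abs_nonneg (Real.sin y)]
    nlinarith [abs_nonneg (Real.cos y), abs_nonneg (Real.sin y)]
  have hderivφ : ∀ s : ℝ, HasDerivAt φ (a * Real.cos (φ s) ^ 2) s := fun s =>
    hφ' s ▸ (hφ s).hasDerivAt
  -- uniqueness of φ
  have key : ∀ s : ℝ, φ s = Real.arctan (a * s) := by
    intro s
    have h0 : (0:ℝ) ∈ Ioo (-|s|-1) (|s|+1) :=
      ⟨by have := abs_nonneg s; linarith, by have := abs_nonneg s; linarith⟩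
    have heq :=
      ODE_solution_unique_of_mem_Icc (v := fun _ y => a * Real.cos y ^ 2)
        (s := fun _ => (univ : Set ℝ)) (fun _ _ => hlip.lipschitzOnWith) h0
        hφ.continuous.continuousOn (fun u _ => hderivφ u) (fun _ _ => mem_univ _)
        ((Real.differentiable_arctan.comp (differentiable_id.const_mul a)).continuous.continuousOn)
        (fun u _ => hDφ u) (fun _ _ => mem_univ _)
        (by simp [hφ0])
    exact heq ⟨by have := neg_abs_le s; linarith, by have := le_abs_self s; linarith⟩
  refine fun s => ⟨key s, ?_, ?_⟩
  · -- t component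
    have hdiff : Differentiable ℝ (fun s => Real.cot θ * Real.arsinh (a * s) + t₀) :=
      fun s => (hDt s).differentiableAt
    have hzero : ∀ u, deriv (fun u => t u - (Real.cot θ * Real.arsinh (a * u) + t₀)) u = 0 := by
      intro u
      rw [deriv_fun_sub (ht u) (hdiff u), ht' u, (hDt u).deriv, key u, sub_self]
    have hc := is_const_of_deriv_eq_zero ((ht.sub hdiff) : Differentiable ℝ _) hzero s 0
    simp only [Pi.sub_apply, mul_zero, Real.arsinh_zero] at hc
    have : t s - (Real.cot θ * Real.arsinh (a * s) + t₀) = t 0 - (Real.cot θ * 0 + t₀) := by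
      simpa using hc
    rw [ht0] at this
    linarith
  · -- z component
    have hdiff : Differentiable ℝ (fun s => Real.cot θ * Real.sqrt (1 + a^2 * s^2) + z₀) :=
      fun s => (hDz s).differentiableAt
    have hzero : ∀ u, deriv (fun u => z u - (Real.cot θ * Real.sqrt (1 + a^2 * u^2) + z₀)) u = 0 := by
      intro u
      rw [deriv_fun_sub (hz u) (hdiff u), hz' u, (hDz u).deriv, key u, sub_self]
    have hc := is_const_of_deriv_eq_zero ((hz.sub hdiff) : Differentiable ℝ _) hzero s 0
    have : z s - (Real.cot θ * Real.sqrt (1 + a^2 * s^2) + z₀)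
        = z 0 - (Real.cot θ * Real.sqrt (1 + a^2 * 0^2) + z₀) := hc
    rw [hz0] at this
    rw [show (1:ℝ) + a^2 * 0^2 = 1 from by ring, Real.sqrt_one, mul_one] at this
    linarith
end
end
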